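/- arXiv:1708.05779 — 6 statements merged into one kernel-verified Lean document; each statement's English description precedes it below -/
import Mathlib

section
/- Let k ≥ 2 be an integer and T a tree with at least k leaves (end-vertices). Then the Steiner k-diameter of T equals d_T(S) for some set S of k leaves of T; that is, the maximum Steiner distance over k-sets is attained on a set of k end-vertices. -/
open SimpleGraph Finset

variable {V : Type*}

/-- The Steiner distance of a vertex set `S` in `G`: the minimum number of edges
of a connected subgraph of `G` whose vertex set contains `S`. -/
noncomputable def steinerDist (G : SimpleGraph V) (S : Set V) : ℕ :=
  sInf {n | ∃ H : G.Subgraph, H.Connected ∧ S ⊆ H.verts ∧ H.edgeSet.ncard = n}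

/-- The Steiner `k`-diameter of `G`: the maximum Steiner distance among `k`-subsets. -/
noncomputable def steinerDiam [Fintype V] (G : SimpleGraph V) (k : ℕ) : ℕ :=
  (Finset.powersetCard k (Finset.univ : Finset V)).sup fun S => steinerDist G (↑S)

private lemma steiner_set_nonempty (T : SimpleGraph V) (hc : T.Connected) (S : Set V) :
    {n | ∃ H : T.Subgraph, H.Connected ∧ S ⊆ H.verts ∧ H.edgeSet.ncard = n}.Nonempty := by
  refine ⟨(⊤ : T.Subgraph).edgeSet.ncard, ⊤, ?_, by simp, rfl⟩
  rw [SimpleGraph.Subgraph.connected_iff']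
  exact (Subgraph.topIso.connected_iff).mpr hc

private lemma steinerDist_le_of_subgraph (T : SimpleGraph V) {S : Set V} {H : T.Subgraph}
    (h1 : H.Connected) (h2 : S ⊆ H.verts) : steinerDist T S ≤ H.edgeSet.ncard :=
  Nat.sInf_le ⟨H, h1, h2, rfl⟩

private lemma exists_min_subgraph (T : SimpleGraph V) (hc : T.Connected) (S : Set V) :
    ∃ H : T.Subgraph, H.Connected ∧ S ⊆ H.verts ∧ H.edgeSet.ncard = steinerDist T S :=
  Nat.sInf_mem (steiner_set_nonempty T hc S)

/-- In a tree, the length of any path equals the distance between its endpoints. -/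
private lemma length_eq_dist_of_isTree [DecidableEq V] {T : SimpleGraph V} (hT : T.IsTree) {u v : V}
    {p : T.Walk u v} (hp : p.IsPath) : p.length = T.dist u v := by
  refine le_antisymm ?_ (SimpleGraph.dist_le p)
  obtain ⟨q, hq⟩ := hT.isConnected.exists_walk_length_eq_dist u v
  have hqp : (q.toPath : T.Walk u v) = p := (hT.existsUnique_path u v).unique q.toPath.2 hp
  calc p.length = q.bypass.length := by rw [← hqp]; rfl
    _ ≤ q.length := q.length_bypass_le
    _ = T.dist u v := hq

private lemma getVert_one_takeUntil [DecidableEq V] {T : SimpleGraph V} {a v c : V}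
    (p : T.Walk a v) (hc : c ∈ p.support) (hca : c ≠ a) :
    (p.takeUntil c hc).getVert 1 = p.getVert 1 := by
  have hlen : (p.takeUntil c hc).length ≠ 0 := fun h =>
    hca (Walk.eq_of_length_eq_zero h).symm
  conv_rhs => rw [← p.take_spec hc]
  rw [Walk.getVert_append]
  rcases lt_or_ge 1 (p.takeUntil c hc).length with h | h
  · rw [if_pos h]
  · have h1 : (p.takeUntil c hc).length = 1 := by omega
    rw [if_neg (by omega)]
    have e1 : (p.takeUntil c hc).getVert 1 = c := by
      conv_lhs => rw [← h1]
      exact Walk.getVert_length _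
    rw [e1, h1, Walk.getVert_zero]

/-- If `v` and `w` lie in different "branches" at `a` (the unique paths from `a`
start with different second vertices), then `a` lies on every path from `v` to `w`. -/
private lemma mem_support_of_dir_ne [DecidableEq V] {T : SimpleGraph V} (hT : T.IsTree)
    {a v w : V} (pv : T.Walk a v) (pw : T.Walk a w) (hpv : pv.IsPath) (hpw : pw.IsPath)
    (hv : v ≠ a) (hw : w ≠ a) (hdir : pv.getVert 1 ≠ pw.getVert 1)
    {q : T.Walk v w} (hq : q.IsPath) : a ∈ q.support := by
  have hint : ∀ c, c ∈ pv.support → c ∈ pw.support → c = a := by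
    intro c hc1 hc2
    by_contra hca
    have h1 : (pv.takeUntil c hc1) = (pw.takeUntil c hc2) :=
      (hT.existsUnique_path a c).unique (hpv.takeUntil hc1) (hpw.takeUntil hc2)
    apply hdir
    rw [← getVert_one_takeUntil pv hc1 hca, h1, getVert_one_takeUntil pw hc2 hca]
  have hrp : (pv.reverse.append pw).IsPath := by
    rw [Walk.isPath_def, Walk.support_append]
    refine List.Nodup.append ?_ ?_ ?_
    · exact hpv.reverse.support_nodup
    · exact hpw.support_nodup.tail
    · intro c hc1 hc2
      have hc1' : c ∈ pv.support := by
        rwa [Walk.support_reverse, List.mem_reverse] at hc1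
      have hc2' : c ∈ pw.support := List.mem_of_mem_tail hc2
      have hca : c = a := hint c hc1' hc2'
      subst hca
      have hnd := hpw.support_nodup
      rw [pw.support_eq_cons] at hnd
      exact (List.nodup_cons.mp hnd).1 hc2
  have hqe : q = pv.reverse.append pw := (hT.existsUnique_path v w).unique hq hrp
  rw [hqe, Walk.mem_support_append_iff]
  exact Or.inl (Walk.end_mem_support _)

/-- From any vertex `a`, in the direction of any neighbor `y`, there is a leaf. -/
private lemma exists_leaf_dir [Fintype V] [DecidableEq V] {T : SimpleGraph V}
    [DecidableRel T.Adj] (hT : T.IsTree) {a y : V} (hay : T.Adj a y) :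
    ∃ ℓ, T.degree ℓ = 1 ∧ ∃ p : T.Walk a ℓ, p.IsPath ∧ 1 ≤ p.length ∧ p.getVert 1 = y := by
  classical
  set C : Finset V := univ.filter
    (fun v => ∃ p : T.Walk a v, p.IsPath ∧ 1 ≤ p.length ∧ p.getVert 1 = y) with hC
  have hyC : y ∈ C := by
    refine mem_filter.mpr ⟨mem_univ _, Walk.cons hay Walk.nil, ?_, by simp, rfl⟩
    rw [Walk.cons_isPath_iff]
    exact ⟨Walk.IsPath.nil, by simp [hay.ne]⟩
  obtain ⟨ℓ, hℓC, hmax⟩ := C.exists_max_image (fun v => T.dist a v) ⟨y, hyC⟩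
  obtain ⟨p, hp, hp1, hpy⟩ := (mem_filter.mp hℓC).2
  refine ⟨ℓ, ?_, p, hp, hp1, hpy⟩
  -- every neighbor of ℓ lies on p
  have hmem : ∀ x, T.Adj ℓ x → x ∈ p.support := by
    intro x hx
    by_contra hns
    have hr : (p.concat hx).IsPath := by
      rw [Walk.isPath_def, Walk.support_concat]
      simp only [List.concat_eq_append, List.nodup_append, List.nodup_cons]
      exact ⟨hp.support_nodup, by simp, by simpa using fun a (h1 : a ∈ p.support) (e : a = x) => hns (e ▸ h1)⟩
    have hg1 : (p.concat hx).getVert 1 = y := by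
      rw [Walk.concat_eq_append, Walk.getVert_append]
      rcases lt_or_ge 1 p.length with h | h
      · rw [if_pos h, hpy]
      · have h1 : p.length = 1 := by omega
        rw [if_neg (by omega), h1]
        have : p.getVert 1 = ℓ := by conv_lhs => rw [← h1]; exact Walk.getVert_length p
        simp only [Nat.sub_self, Walk.getVert_zero]
        rw [← hpy, this]
    have hxC : x ∈ C := mem_filter.mpr ⟨mem_univ _, p.concat hx, hr,
      by rw [Walk.length_concat]; omega, hg1⟩
    have h1 := hmax x hxC
    rw [← length_eq_dist_of_isTree hT hr, ← length_eq_dist_of_isTree hT hp,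
      Walk.length_concat] at h1
    omega
  -- every neighbor of ℓ on p is the penultimate vertex
  have hpen : ∀ x, T.Adj ℓ x → x ∈ p.support → x = p.getVert (p.length - 1) := by
    intro x hx hxs
    have hq : (p.takeUntil x hxs).IsPath := hp.takeUntil hxs
    have hlnq : ℓ ∉ (p.takeUntil x hxs).support := by
      intro hmem'
      have hnd := hp.support_nodup
      rw [← p.take_spec hxs, Walk.support_append] at hnd
      have hℓtail : ℓ ∈ (p.dropUntil x hxs).support.tail := by
        have h2 : ℓ ∈ (p.dropUntil x hxs).support := Walk.end_mem_support _
        rw [Walk.support_eq_cons] at h2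
        rcases List.mem_cons.mp h2 with h | h
        · exact absurd h hx.ne
        · exact h
      exact (List.disjoint_of_nodup_append hnd) hmem' hℓtail
    have hr : ((p.takeUntil x hxs).concat hx.symm).IsPath := by
      rw [Walk.isPath_def, Walk.support_concat]
      simp only [List.concat_eq_append, List.nodup_append, List.nodup_cons]
      exact ⟨hq.support_nodup, by simp, by simpa using fun a (h1 : a ∈ (p.takeUntil x hxs).support) (e : a = ℓ) => hlnq (e ▸ h1)⟩
    have he : (p.takeUntil x hxs).concat hx.symm = p :=
      (hT.existsUnique_path a ℓ).unique hr hp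
    have hthis : ((p.takeUntil x hxs).concat hx.symm).getVert
        (((p.takeUntil x hxs).concat hx.symm).length - 1) = x := by
      rw [Walk.length_concat, Nat.add_sub_cancel, Walk.concat_eq_append, Walk.getVert_append,
        if_neg (lt_irrefl _), Nat.sub_self, Walk.getVert_zero]
    rw [← he]
    exact hthis.symm
  have hpa : T.Adj (p.getVert (p.length - 1)) ℓ := by
    have h := p.adj_getVert_succ (i := p.length - 1) (by omega)
    rwa [Nat.sub_add_cancel hp1, Walk.getVert_length] at h
  have hnb : T.neighborFinset ℓ = {p.getVert (p.length - 1)} := by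
    apply Finset.eq_singleton_iff_unique_mem.mpr
    refine ⟨(T.mem_neighborFinset ℓ _).mpr hpa.symm, fun x hx => ?_⟩
    have hadj := (T.mem_neighborFinset ℓ x).mp hx
    exact hpen x hadj (hmem x hadj)
  rw [← card_neighborFinset_eq_degree, hnb, card_singleton]

/-- Given a non-leaf `a` in a `k`-set `A` (with at least `|A|` leaves in the tree),
we find a leaf `ℓ ∉ A` and `b ∈ A \ {a}` such that `a` separates `b` from `ℓ`. -/
private lemma exists_cut [Fintype V] [DecidableEq V] {T : SimpleGraph V} [DecidableRel T.Adj]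
    (hT : T.IsTree) {A : Finset V} {a : V} (ha : a ∈ A) (hna : ¬ T.degree a = 1)
    (hA2 : 2 ≤ A.card) (hL : A.card ≤ (univ.filter fun v => T.degree v = 1).card) :
    ∃ ℓ b, T.degree ℓ = 1 ∧ ℓ ∉ A ∧ b ∈ A ∧ b ≠ a ∧
      (∀ q : T.Walk b ℓ, q.IsPath → a ∈ q.support) := by
  classical
  choose f hf hfu using fun v => hT.existsUnique_path a v
  have hex : ∃ ℓ0, T.degree ℓ0 = 1 ∧ ℓ0 ∉ A := by
    by_contra h
    push_neg at h
    have hsub : (univ.filter fun v => T.degree v = 1) ⊆ A.erase a := by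
      intro v hv
      have hdv := (mem_filter.mp hv).2
      exact mem_erase.mpr ⟨fun he => hna (he ▸ hdv), h v hdv⟩
    have := card_le_card hsub
    rw [card_erase_of_mem ha] at this
    omega
  obtain ⟨ℓ0, hℓ0, hℓ0A⟩ := hex
  have hℓ0a : ℓ0 ≠ a := fun h => hna (h ▸ hℓ0)
  by_cases hcase : ∃ b ∈ A, b ≠ a ∧ (f b).getVert 1 ≠ (f ℓ0).getVert 1
  · obtain ⟨b, hbA, hba, hdir⟩ := hcase
    exact ⟨ℓ0, b, hℓ0, hℓ0A, hbA, hba, fun q hq =>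
      mem_support_of_dir_ne hT (f b) (f ℓ0) (hf b) (hf ℓ0) hba hℓ0a hdir hq⟩
  · push_neg at hcase
    have hx : T.Adj a ((f ℓ0).getVert 1) :=
      Walk.adj_snd (Walk.not_nil_of_ne (Ne.symm hℓ0a))
    have hy : ∃ y, T.Adj a y ∧ y ≠ (f ℓ0).getVert 1 := by
      by_contra h
      push_neg at h
      apply hna
      have hnb : T.neighborFinset a = {(f ℓ0).getVert 1} :=
        Finset.eq_singleton_iff_unique_mem.mpr
          ⟨(T.mem_neighborFinset a _).mpr hx, fun x hxm => h x ((T.mem_neighborFinset a x).mp hxm)⟩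
      rw [← card_neighborFinset_eq_degree, hnb, card_singleton]
    obtain ⟨y, hay, hyx⟩ := hy
    obtain ⟨ℓ, hℓdeg, p, hp, hp1, hpy⟩ := exists_leaf_dir hT hay
    have hℓa : ℓ ≠ a := by
      intro h
      subst h
      have := length_eq_dist_of_isTree hT hp
      rw [SimpleGraph.dist_self] at this
      omega
    have hfℓ : f ℓ = p := (hfu ℓ p hp).symm
    have hℓA : ℓ ∉ A := by
      intro hmem
      have h := hcase ℓ hmem hℓa
      rw [hfℓ, hpy] at h
      exact hyx h
    obtain ⟨b, hb⟩ : (A.erase a).Nonempty := by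
      rw [← card_pos, card_erase_of_mem ha]; omega
    rw [mem_erase] at hb
    refine ⟨ℓ, b, hℓdeg, hℓA, hb.2, hb.1, fun q hq => ?_⟩
    apply mem_support_of_dir_ne hT (f b) p (hf b) hp hb.1 hℓa ?_ hq
    rw [hcase b hb.2 hb.1, hpy]
    exact fun h => hyx h.symm

/-- The exchange step: replacing a non-leaf `a ∈ A` by a leaf `ℓ` separated from
`b ∈ A` by `a` does not decrease the Steiner distance. -/
private lemma steinerDist_exchange [DecidableEq V] {T : SimpleGraph V}
    (hT : T.IsTree) {A : Finset V} {a b ℓ : V} (hb : b ∈ A) (hba : b ≠ a)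
    (hcut : ∀ q : T.Walk b ℓ, q.IsPath → a ∈ q.support) :
    steinerDist T (A : Set V) ≤ steinerDist T (↑(insert ℓ (A.erase a)) : Set V) := by
  obtain ⟨H, hH1, hH2, hH3⟩ :=
    exists_min_subgraph T hT.isConnected (↑(insert ℓ (A.erase a)) : Set V)
  rw [← hH3]
  apply steinerDist_le_of_subgraph T hH1
  have hbH : b ∈ H.verts := hH2 (by simp [hb, hba])
  have hℓH : ℓ ∈ H.verts := hH2 (by simp)
  have haH : a ∈ H.verts := by
    obtain ⟨W0⟩ := hH1.coe.preconnected ⟨b, hbH⟩ ⟨ℓ, hℓH⟩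
    have W : T.Walk b ℓ := (W0.map H.hom).copy rfl rfl
    have hsup : a ∈ (((W0.map H.hom).copy rfl rfl : T.Walk b ℓ).toPath :
        T.Walk b ℓ).support := hcut _ ((W0.map H.hom).copy rfl rfl : T.Walk b ℓ).toPath.2
    have hsup2 : a ∈ ((W0.map H.hom).copy rfl rfl : T.Walk b ℓ).support :=
      Walk.support_toPath_subset _ hsup
    replace hsup2 : a ∈ (W0.map H.hom).support := hsup2
    rw [Walk.support_map] at hsup2
    obtain ⟨v0, _, hv0a⟩ := List.mem_map.mp hsup2
    exact hv0a ▸ v0.2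
  intro x hx
  rcases eq_or_ne x a with rfl | hxa
  · exact haH
  · exact hH2 (by simp only [coe_insert, Set.mem_insert_iff, coe_erase, Set.mem_diff,
      Set.mem_singleton_iff]; right; exact ⟨hx, hxa⟩)

private lemma key_lemma [Fintype V] [DecidableEq V] (T : SimpleGraph V) [DecidableRel T.Adj]
    (hT : T.IsTree) (k : ℕ) (hk : 2 ≤ k)
    (hleaves : k ≤ (univ.filter fun v => T.degree v = 1).card) :
    ∀ n (A : Finset V), (A.filter fun v => ¬ T.degree v = 1).card = n → A.card = k →
      ∃ S : Finset V, S.card = k ∧ (∀ x ∈ S, T.degree x = 1) ∧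
        steinerDist T ↑A ≤ steinerDist T ↑S := by
  intro n
  induction n using Nat.strong_induction_on with
  | _ n ih =>
    intro A hn hcard
    rcases Nat.eq_zero_or_pos n with rfl | hpos
    · refine ⟨A, hcard, fun x hx => ?_, le_refl _⟩
      by_contra h
      have hxf : x ∈ A.filter (fun v => ¬ T.degree v = 1) := mem_filter.mpr ⟨hx, h⟩
      rw [Finset.card_eq_zero.mp hn] at hxf
      exact absurd hxf (notMem_empty x)
    · obtain ⟨a, haf⟩ : (A.filter fun v => ¬ T.degree v = 1).Nonempty :=
        card_pos.mp (hn ▸ hpos)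
      have haf' := mem_filter.mp haf
      obtain ⟨ℓ, b, hℓdeg, hℓA, hbA, hba, hcut⟩ :=
        exists_cut hT haf'.1 haf'.2 (hcard ▸ hk) (hcard ▸ hleaves)
      have hA'card : (insert ℓ (A.erase a)).card = k := by
        rw [card_insert_of_notMem (fun h => hℓA (mem_of_mem_erase h)),
          card_erase_of_mem haf'.1]
        omega
      have hfeq : (insert ℓ (A.erase a)).filter (fun v => ¬ T.degree v = 1)
          = (A.filter fun v => ¬ T.degree v = 1).erase a := by
        ext x
        simp only [mem_filter, mem_insert, mem_erase]
        constructor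
        · rintro ⟨h | ⟨hxa, hxA⟩, hd⟩
          · exact absurd (h ▸ hℓdeg) hd
          · exact ⟨hxa, hxA, hd⟩
        · rintro ⟨hxa, hxA, hd⟩
          exact ⟨Or.inr ⟨hxa, hxA⟩, hd⟩
      have hflt : ((insert ℓ (A.erase a)).filter (fun v => ¬ T.degree v = 1)).card < n := by
        rw [hfeq, card_erase_of_mem haf, hn]
        omega
      obtain ⟨S, h1, h2, h3⟩ := ih _ hflt (insert ℓ (A.erase a)) rfl hA'card
      exact ⟨S, h1, h2, le_trans (steinerDist_exchange hT hbA hba hcut) h3⟩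

theorem stmt_3 [Fintype V] [DecidableEq V] (T : SimpleGraph V) [DecidableRel T.Adj]
    (hT : T.IsTree) (k : ℕ) (hk : 2 ≤ k)
    (hleaves : k ≤ (Finset.univ.filter fun v => T.degree v = 1).card) :
    ∃ S : Finset V, S.card = k ∧ (∀ x ∈ S, T.degree x = 1) ∧
      steinerDiam T k = steinerDist T (↑S) := by
  classical
  have hkV : k ≤ (univ : Finset V).card :=
    le_trans hleaves (card_le_card (filter_subset _ _))
  have hne : (powersetCard k (univ : Finset V)).Nonempty :=
    powersetCard_nonempty.mpr hkV
  obtain ⟨A, hA, hAs⟩ := Finset.exists_mem_eq_sup _ hne (fun S : Finset V => steinerDist T (↑S))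
  rw [mem_powersetCard] at hA
  obtain ⟨S, h1, h2, h3⟩ := key_lemma T hT k hk hleaves _ A rfl hA.2
  refine ⟨S, h1, h2, le_antisymm ?_ ?_⟩
  · rw [steinerDiam, hAs]
    exact h3
  · exact Finset.le_sup (f := fun S : Finset V => steinerDist T (↑S))
      (mem_powersetCard.mpr ⟨subset_univ _, h1⟩)
end

section
/- Let k ≥ 3 be an integer and T a tree of order n ≥ k. Then sdiam_{k−1}(T) ≤ sdiam_k(T) ≤ (k/(k−1))·sdiam_{k−1}(T). -/
open SimpleGraph Finset

variable {V : Type*}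

/-- The unique path between two vertices of a tree. -/
noncomputable def treePath (T : SimpleGraph V) (hT : T.IsTree) (a b : V) : T.Walk a b :=
  (hT.existsUnique_path a b).exists.choose

lemma treePath_isPath (T : SimpleGraph V) (hT : T.IsTree) (a b : V) :
    (treePath T hT a b).IsPath := (hT.existsUnique_path a b).exists.choose_spec

lemma toSubgraph_le_of_subset {T : SimpleGraph V} {a b c d : V} {p : T.Walk a b}
    {q : T.Walk c d} (hs : p.support ⊆ q.support) (he : p.edges ⊆ q.edges) :
    p.toSubgraph ≤ q.toSubgraph := by
  constructor
  · intro x hx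
    rw [Walk.mem_verts_toSubgraph] at hx ⊢
    exact hs hx
  · intro x y hxy
    have : s(x, y) ∈ p.toSubgraph.edgeSet := hxy
    rw [Walk.mem_edges_toSubgraph] at this
    have : s(x, y) ∈ q.toSubgraph.edgeSet := by
      rw [Walk.mem_edges_toSubgraph]; exact he this
    exact this

lemma treePath_toSubgraph_le {T : SimpleGraph V} (hT : T.IsTree) {H : T.Subgraph}
    (hH : H.Connected) {x y : V} (hx : x ∈ H.verts) (hy : y ∈ H.verts) :
    (treePath T hT x y).toSubgraph ≤ H := by
  classical
  obtain ⟨p, hp⟩ := ((Subgraph.connected_iff_forall_exists_walk_subgraph H).mp hH).2 hx hy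
  have huniq : treePath T hT x y = p.bypass :=
    (hT.existsUnique_path x y).unique (treePath_isPath T hT x y) p.bypass_isPath
  rw [huniq]
  exact le_trans (toSubgraph_le_of_subset p.support_bypass_subset p.edges_bypass_subset) hp

/-- The union of the tree paths from a basepoint `a0` to all elements of a finite set `S`. -/
noncomputable def stree (T : SimpleGraph V) (hT : T.IsTree) (a0 : V) (S : Finset V) :
    T.Subgraph :=
  S.sup fun b => (treePath T hT a0 b).toSubgraph

lemma subset_stree_verts (T : SimpleGraph V) (hT : T.IsTree) (a0 : V) (S : Finset V) :
    ↑S ⊆ (stree T hT a0 S).verts := by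
  intro b hb
  simp only [Finset.mem_coe] at hb
  have h := Finset.le_sup (f := fun b => (treePath T hT a0 b).toSubgraph) hb
  exact h.1 ((treePath T hT a0 b).end_mem_verts_toSubgraph)

lemma basept_mem_stree_verts (T : SimpleGraph V) (hT : T.IsTree) (a0 : V) {S : Finset V}
    (hS : S.Nonempty) : a0 ∈ (stree T hT a0 S).verts := by
  obtain ⟨b, hb⟩ := hS
  have h := Finset.le_sup (f := fun b => (treePath T hT a0 b).toSubgraph) hb
  exact h.1 ((treePath T hT a0 b).start_mem_verts_toSubgraph)

lemma stree_connected (T : SimpleGraph V) (hT : T.IsTree) (a0 : V) {S : Finset V}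
    (hS : S.Nonempty) : (stree T hT a0 S).Connected := by
  classical
  induction hS using Finset.Nonempty.cons_induction with
  | singleton b => simpa [stree] using (treePath T hT a0 b).toSubgraph_connected
  | cons b S hb hS ih =>
      rw [stree, Finset.sup_cons]
      refine Subgraph.connected_sup (treePath T hT a0 b).toSubgraph_connected.preconnected ih.preconnected ⟨a0, ?_, ?_⟩
      · exact (treePath T hT a0 b).start_mem_verts_toSubgraph
      · exact basept_mem_stree_verts T hT a0 hS

lemma stree_le (T : SimpleGraph V) (hT : T.IsTree) {a0 : V} {S : Finset V} {H : T.Subgraph}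
    (hH : H.Connected) (ha0 : a0 ∈ H.verts) (hS : ↑S ⊆ H.verts) : stree T hT a0 S ≤ H :=
  Finset.sup_le fun b hb => treePath_toSubgraph_le hT hH ha0 (hS hb)

lemma stree_edgeSet (T : SimpleGraph V) (hT : T.IsTree) (a0 : V) (S : Finset V) :
    (stree T hT a0 S).edgeSet = ⋃ b ∈ (S : Set V), (treePath T hT a0 b).toSubgraph.edgeSet := by
  classical
  induction S using Finset.cons_induction with
  | empty => simp [stree]
  | cons b S hb ih =>
      rw [stree, Finset.sup_cons, Subgraph.edgeSet_sup]
      rw [stree] at ih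
      rw [ih]
      simp [Set.biUnion_insert]

lemma steinerDist_eq (T : SimpleGraph V) (hT : T.IsTree) [Fintype V] {a0 : V} {S : Finset V}
    (ha0 : a0 ∈ S) : steinerDist T ↑S = (stree T hT a0 S).edgeSet.ncard := by
  have hmem : (stree T hT a0 S).edgeSet.ncard ∈
      {n | ∃ H : T.Subgraph, H.Connected ∧ ↑S ⊆ H.verts ∧ H.edgeSet.ncard = n} :=
    ⟨stree T hT a0 S, stree_connected T hT a0 ⟨a0, ha0⟩, subset_stree_verts T hT a0 S, rfl⟩
  refine le_antisymm (Nat.sInf_le hmem) ?_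
  obtain ⟨H, hHc, hHs, hHn⟩ := Nat.sInf_mem (⟨_, hmem⟩ :
    {n | ∃ H : T.Subgraph, H.Connected ∧ ↑S ⊆ H.verts ∧ H.edgeSet.ncard = n}.Nonempty)
  rw [show steinerDist T ↑S = H.edgeSet.ncard from hHn.symm]
  exact Set.ncard_le_ncard
    (Subgraph.edgeSet_mono (stree_le T hT hHc (hHs (Finset.mem_coe.mpr ha0)) hHs))
    (Set.toFinite _)

lemma steinerDist_mono (T : SimpleGraph V) (hT : T.IsTree) [Fintype V] {A B : Finset V}
    (hAB : A ⊆ B) (hB : B.Nonempty) : steinerDist T ↑A ≤ steinerDist T ↑B := by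
  obtain ⟨b, hb⟩ := hB
  rw [steinerDist_eq T hT hb]
  apply Nat.sInf_le
  refine ⟨stree T hT b B, stree_connected T hT b ⟨b, hb⟩, ?_, rfl⟩
  exact fun x hx => subset_stree_verts T hT b B (Finset.coe_subset.mpr hAB hx)

lemma key [Fintype V] [DecidableEq V] (T : SimpleGraph V) (hT : T.IsTree) {S : Finset V}
    (hS3 : 3 ≤ S.card) :
    (S.card - 1) * steinerDist T ↑S ≤ ∑ v ∈ S, steinerDist T ↑(S.erase v) := by
  classical
  obtain ⟨a0, ha0⟩ := Finset.card_pos.mp (show 0 < S.card by omega)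
  set W := stree T hT a0 S with hW
  set E := W.edgeSet with hE
  have hSne : S.Nonempty := ⟨a0, ha0⟩
  have hWconn : W.Connected := stree_connected T hT a0 hSne
  have hereN : ∀ v, (S.erase v).Nonempty := by
    intro v
    rw [← Finset.card_pos]
    have := Finset.pred_card_le_card_erase (a := v) (s := S)
    omega
  set b : V → V := fun v => (hereN v).choose with hb
  have hbmem : ∀ v, b v ∈ S.erase v := fun v => (hereN v).choose_spec
  set Wv : V → T.Subgraph := fun v => stree T hT (b v) (S.erase v) with hWv
  have hWvconn : ∀ v, (Wv v).Connected := fun v => stree_connected T hT _ (hereN v)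
  have hWvle : ∀ v, Wv v ≤ W := by
    intro v
    refine stree_le T hT hWconn ?_ ?_
    · exact subset_stree_verts T hT a0 S (Finset.mem_coe.mpr (Finset.mem_of_mem_erase (hbmem v)))
    · exact fun x hx => subset_stree_verts T hT a0 S
        (Finset.mem_coe.mpr (Finset.mem_of_mem_erase (Finset.mem_coe.mp hx)))
  have hdist : ∀ v, steinerDist T ↑(S.erase v) = (Wv v).edgeSet.ncard := fun v =>
    steinerDist_eq T hT (hbmem v)
  -- paths between points avoiding v live in Wv v
  have pathsub : ∀ v, ∀ x ∈ S.erase v, ∀ y ∈ S.erase v,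
      (treePath T hT x y).toSubgraph ≤ Wv v := by
    intro v x hx y hy
    exact treePath_toSubgraph_le hT (hWvconn v)
      (subset_stree_verts T hT _ _ (Finset.mem_coe.mpr hx))
      (subset_stree_verts T hT _ _ (Finset.mem_coe.mpr hy))
  -- covering claim
  have cover : ∀ u ∈ S, ∀ v ∈ S, u ≠ v → E ⊆ (Wv u).edgeSet ∪ (Wv v).edgeSet := by
    intro u hu v hv huv e he
    rw [hE, hW, stree_edgeSet] at he
    simp only [Set.mem_iUnion, Finset.mem_coe, exists_prop] at he
    obtain ⟨c, hcS, hec⟩ := he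
    -- helper : if both endpoints avoid z then e ∈ Wv z
    have havoid : ∀ z ∈ S, ∀ x ∈ S, ∀ y ∈ S, x ≠ z → y ≠ z →
        e ∈ (treePath T hT x y).toSubgraph.edgeSet → e ∈ (Wv z).edgeSet := by
      intro z hz x hx y hy hxz hyz hee
      exact Subgraph.edgeSet_mono
        (pathsub z x (Finset.mem_erase.mpr ⟨hxz, hx⟩) y (Finset.mem_erase.mpr ⟨hyz, hy⟩)) hee
    by_cases h1 : a0 ≠ u ∧ c ≠ u
    · exact Or.inl (havoid u hu a0 ha0 c hcS h1.1 h1.2 hec)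
    by_cases h2 : a0 ≠ v ∧ c ≠ v
    · exact Or.inr (havoid v hv a0 ha0 c hcS h2.1 h2.2 hec)
    push_neg at h1 h2
    -- pick w different from u and v
    have hwex : ((S.erase u).erase v).Nonempty := by
      rw [← Finset.card_pos]
      have h3 := Finset.pred_card_le_card_erase (a := u) (s := S)
      have h4 := Finset.pred_card_le_card_erase (a := v) (s := S.erase u)
      omega
    obtain ⟨w, hw⟩ := hwex
    have hwv : w ≠ v := (Finset.mem_erase.mp hw).1
    have hwu : w ≠ u := (Finset.mem_erase.mp (Finset.mem_of_mem_erase hw)).1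
    have hwS : w ∈ S := Finset.mem_of_mem_erase (Finset.mem_of_mem_erase hw)
    -- the path a0-c is inside path a0-w ∪ path w-c
    set K := (treePath T hT a0 w).toSubgraph ⊔ (treePath T hT w c).toSubgraph with hK
    have hKconn : K.Connected := by
      refine Subgraph.connected_sup (treePath T hT a0 w).toSubgraph_connected.preconnected
        (treePath T hT w c).toSubgraph_connected.preconnected ⟨w, ?_, ?_⟩
      · exact (treePath T hT a0 w).end_mem_verts_toSubgraph
      · exact (treePath T hT w c).start_mem_verts_toSubgraph
    have hle : (treePath T hT a0 c).toSubgraph ≤ K := by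
      refine treePath_toSubgraph_le hT hKconn ?_ ?_
      · exact Or.inl (treePath T hT a0 w).start_mem_verts_toSubgraph
      · exact Or.inr (treePath T hT w c).end_mem_verts_toSubgraph
    have heK : e ∈ (treePath T hT a0 w).toSubgraph.edgeSet ∪
        (treePath T hT w c).toSubgraph.edgeSet := by
      rw [← Subgraph.edgeSet_sup]
      exact Subgraph.edgeSet_mono hle hec
    -- case analysis on which of a0, c equals u, v
    rcases heK with he1 | he2
    · rcases eq_or_ne a0 u with rfl | hau
      · exact Or.inr (havoid v hv a0 ha0 w hwS huv hwv he1)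
      · rcases eq_or_ne a0 v with rfl | hav
        · exact Or.inl (havoid u hu a0 ha0 w hwS (Ne.symm huv) hwu he1)
        · exact Or.inl (havoid u hu a0 ha0 w hwS hau hwu he1)
    · rcases eq_or_ne c u with rfl | hcu
      · exact Or.inr (havoid v hv w hwS c hcS hwv huv he2)
      · rcases eq_or_ne c v with rfl | hcv
        · exact Or.inl (havoid u hu w hwS c hcS hwu (Ne.symm huv) he2)
        · exact Or.inl (havoid u hu w hwS c hcS hwu hcu he2)
  -- counting
  set B : V → Set (Sym2 V) := fun v => E \ (Wv v).edgeSet with hB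
  have hEfin : E.Finite := Set.toFinite _
  have hBfin : ∀ v, (B v).Finite := fun v => hEfin.subset Set.diff_subset
  have hsubE : ∀ v, (Wv v).edgeSet ⊆ E := fun v => Subgraph.edgeSet_mono (hWvle v)
  have hcardv : ∀ v, (B v).ncard + (Wv v).edgeSet.ncard = E.ncard := fun v =>
    Set.ncard_diff_add_ncard_of_subset (hsubE v) hEfin
  have hdisj : ∀ u ∈ S, ∀ v ∈ S, u ≠ v → Disjoint (B u) (B v) := by
    intro u hu v hv huv
    rw [Set.disjoint_left]
    intro e heu hev
    rcases cover u hu v hv huv heu.1 with h | h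
    · exact heu.2 h
    · exact hev.2 h
  have hsum : ∑ v ∈ S, (B v).ncard ≤ E.ncard := by
    have hcards : ∀ v, (B v).ncard = ((hBfin v).toFinset).card := fun v =>
      Set.ncard_eq_toFinset_card _ (hBfin v)
    calc ∑ v ∈ S, (B v).ncard = ∑ v ∈ S, ((hBfin v).toFinset).card := by
          simp_rw [hcards]
      _ = (S.biUnion fun v => (hBfin v).toFinset).card := by
          rw [Finset.card_biUnion]
          intro u hu v hv huv
          rw [Function.onFun, Set.Finite.disjoint_toFinset]
          exact hdisj u hu v hv huv
      _ ≤ hEfin.toFinset.card := by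
          apply Finset.card_le_card
          intro e he
          rw [Finset.mem_biUnion] at he
          obtain ⟨v, _, hev⟩ := he
          rw [Set.Finite.mem_toFinset] at hev ⊢
          exact hev.1
      _ = E.ncard := (Set.ncard_eq_toFinset_card _ hEfin).symm
  -- final arithmetic
  have hS_dist : steinerDist T ↑S = E.ncard := steinerDist_eq T hT ha0
  have hmain : S.card * E.ncard ≤ (∑ v ∈ S, steinerDist T ↑(S.erase v)) + E.ncard := by
    calc S.card * E.ncard = ∑ _v ∈ S, E.ncard := by rw [Finset.sum_const, smul_eq_mul]
      _ = ∑ v ∈ S, ((B v).ncard + (Wv v).edgeSet.ncard) := by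
          apply Finset.sum_congr rfl; intro v _; rw [hcardv v]
      _ = (∑ v ∈ S, (Wv v).edgeSet.ncard) + ∑ v ∈ S, (B v).ncard := by
          rw [Finset.sum_add_distrib, add_comm]
      _ ≤ (∑ v ∈ S, steinerDist T ↑(S.erase v)) + E.ncard := by
          refine add_le_add (le_of_eq ?_) hsum
          exact (Finset.sum_congr rfl fun v _ => (hdist v)).symm
  rw [hS_dist]
  have hcc : (S.card - 1) + 1 = S.card := by omega
  have : (S.card - 1) * E.ncard + E.ncard = S.card * E.ncard := by
    conv_rhs => rw [← hcc]
    ring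
  omega

theorem stmt_4 [Fintype V] (T : SimpleGraph V) (hT : T.IsTree)
    (k : ℕ) (hk : 3 ≤ k) (hk' : k ≤ Fintype.card V) :
    steinerDiam T (k - 1) ≤ steinerDiam T k ∧
      (k - 1) * steinerDiam T k ≤ k * steinerDiam T (k - 1) := by
  classical
  constructor
  · -- monotonicity
    apply Finset.sup_le
    intro A hA
    have hAcard : A.card = k - 1 := (Finset.mem_powersetCard_univ.mp hA)
    obtain ⟨B, hAB, _, hBcard⟩ := Finset.exists_subsuperset_card_eq (A.subset_univ)
      (by omega : A.card ≤ k) (by simpa using hk')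
    refine le_trans (steinerDist_mono T hT hAB ?_) ?_
    · rw [← Finset.card_pos, hBcard]; omega
    · exact Finset.le_sup (f := fun S : Finset V => steinerDist T (↑S : Set V))
        (Finset.mem_powersetCard_univ.mpr hBcard)
  · -- the other inequality
    have hne : (Finset.powersetCard k (Finset.univ : Finset V)).Nonempty :=
      Finset.powersetCard_nonempty.mpr (by simpa using hk')
    obtain ⟨S₀, hS₀, hEq⟩ := Finset.exists_mem_eq_sup (Finset.powersetCard k (Finset.univ : Finset V)) hne (fun S : Finset V => steinerDist T (↑S : Set V))
    have hS₀card : S₀.card = k := Finset.mem_powersetCard_univ.mp hS₀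
    rw [steinerDiam, hEq]
    have hkey := key T hT (S := S₀) (by omega)
    rw [hS₀card] at hkey
    refine le_trans hkey ?_
    have hterm : ∀ v ∈ S₀, steinerDist T ↑(S₀.erase v) ≤ steinerDiam T (k - 1) := by
      intro v hv
      refine Finset.le_sup (f := fun S : Finset V => steinerDist T (↑S : Set V))
        (Finset.mem_powersetCard_univ.mpr ?_)
      rw [Finset.card_erase_of_mem hv, hS₀card]
    calc ∑ v ∈ S₀, steinerDist T ↑(S₀.erase v) ≤ ∑ _v ∈ S₀, steinerDiam T (k - 1) :=
          Finset.sum_le_sum hterm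
      _ = k * steinerDiam T (k - 1) := by rw [Finset.sum_const, smul_eq_mul, hS₀card]
end

section
/- Let k ≥ 3 be an integer and T a tree of order n ≥ k. Then sdiam_{k−1}(T) = srad_k(T). -/
open SimpleGraph Finset

variable {V : Type*}

/-- The Steiner `k`-eccentricity of a vertex `v`. -/
noncomputable def steinerEcc [Fintype V] [DecidableEq V] (G : SimpleGraph V) (k : ℕ) (v : V) : ℕ :=
  ((Finset.powersetCard k (Finset.univ : Finset V)).filter fun S => v ∈ S).sup
    fun S => steinerDist G (↑S)

/-- The Steiner `k`-radius of `G`. -/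
noncomputable def steinerRad [Fintype V] [DecidableEq V] (G : SimpleGraph V) (k : ℕ) : ℕ :=
  sInf (Set.range (steinerEcc G k))

set_option linter.unusedSectionVars false
set_option linter.unusedVariables false

namespace SteinerAux

variable {V : Type*} [DecidableEq V] {T : SimpleGraph V}

/-- `u` lies between `a` and `b`. -/
def Btw (T : SimpleGraph V) (a u b : V) : Prop :=
  T.dist a u + T.dist u b = T.dist a b

lemma btw_left (a b : V) : Btw T a a b := by simp [Btw]

lemma btw_right (a b : V) : Btw T a b b := by simp [Btw]

lemma Btw.symm {a u b : V} (h : Btw T a u b) : Btw T b u a := by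
  unfold Btw at *
  have e1 := SimpleGraph.dist_comm (G := T) (u := b) (v := u)
  have e2 := SimpleGraph.dist_comm (G := T) (u := u) (v := a)
  have e3 := SimpleGraph.dist_comm (G := T) (u := b) (v := a)
  omega

lemma eq_of_dist_eq_zero (hc : T.Connected) {u v : V} (h : T.dist u v = 0) : u = v :=
  (hc.dist_eq_zero_iff).mp h

lemma btw_self_eq (hc : T.Connected) {a u : V} (h : Btw T a u a) : u = a := by
  unfold Btw at h
  rw [SimpleGraph.dist_self] at h
  have := SimpleGraph.dist_comm (G := T) (u := a) (v := u)
  exact (eq_of_dist_eq_zero hc (by omega)).symm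

/-- concatenation of betweenness. -/
lemma Btw.trans (hc : T.Connected) {a u x b : V} (h1 : Btw T a u x) (h2 : Btw T a x b) :
    Btw T a u b := by
  unfold Btw at *
  have t1 : T.dist u b ≤ T.dist u x + T.dist x b := hc.dist_triangle
  have t2 : T.dist a b ≤ T.dist a u + T.dist u b := hc.dist_triangle
  omega

lemma supp_btw (hc : T.Connected) {a b u : V} {p : T.Walk a b}
    (hl : p.length = T.dist a b) (hu : u ∈ p.support) : Btw T a u b := by
  have hsum : (p.takeUntil u hu).length + (p.dropUntil u hu).length = p.length := by
    have := congrArg Walk.length (p.take_spec hu)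
    rwa [Walk.length_append] at this
  have h1 : T.dist a u ≤ (p.takeUntil u hu).length := dist_le _
  have h2 : T.dist u b ≤ (p.dropUntil u hu).length := dist_le _
  have t : T.dist a b ≤ T.dist a u + T.dist u b := hc.dist_triangle
  unfold Btw
  omega

lemma dist_getVert_le (hc : T.Connected) {a b : V} (p : T.Walk a b) (i : ℕ) :
    T.dist a (p.getVert i) ≤ i := by
  induction p generalizing i with
  | nil => simp [Walk.getVert_of_length_le, SimpleGraph.dist_self]
  | @cons u v w h q ih =>
    cases i with
    | zero => simp
    | succ n =>
      have h1 : T.dist u (q.getVert n) ≤ T.dist u v + T.dist v (q.getVert n) :=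
        hc.dist_triangle
      have h2 : T.dist u v ≤ 1 := by
        have : T.dist u v = 1 := by simp [h]
        omega
      have := ih n
      simpa [Walk.getVert_cons_succ] using le_trans h1 (by omega)

lemma getVert_spec (hc : T.Connected) {a b : V} (p : T.Walk a b)
    (hl : p.length = T.dist a b) {i : ℕ} (hi : i ≤ p.length) :
    T.dist a (p.getVert i) = i ∧ T.dist (p.getVert i) b = p.length - i := by
  have h1 : T.dist a (p.getVert i) ≤ i := dist_getVert_le hc p i
  have h2 : T.dist b (p.getVert i) ≤ p.length - i := by
    have := dist_getVert_le hc p.reverse (p.length - i)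
    rwa [Walk.getVert_reverse, show p.length - (p.length - i) = i by omega] at this
  have t : T.dist a b ≤ T.dist a (p.getVert i) + T.dist (p.getVert i) b := hc.dist_triangle
  rw [SimpleGraph.dist_comm (G := T) (u := b)] at h2
  omega

lemma dist_adj (hc : T.Connected) {x y : V} (h : T.Adj x y) : T.dist x y = 1 := by
  simp [h]

/-- In a tree, if the edge `xy` lies "on the way" from `a` to `b`, then every walk
from `a` to `b` uses that edge. -/
lemma forced_edge (hT : T.IsTree) {a b x y : V} (hxy : T.Adj x y)
    (hd : T.dist a b = T.dist a x + 1 + T.dist y b) (W : T.Walk a b) : s(x, y) ∈ W.edges := by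
  have hc := hT.isConnected
  by_contra hW
  have hxy1 : T.dist x y = 1 := dist_adj hc hxy
  have hay : T.dist a y = T.dist a x + 1 := by
    have t1 : T.dist a y ≤ T.dist a x + T.dist x y := hc.dist_triangle
    have t2 : T.dist a b ≤ T.dist a y + T.dist y b := hc.dist_triangle
    omega
  have hxb : T.dist x b = T.dist y b + 1 := by
    have t1 : T.dist x b ≤ T.dist x y + T.dist y b := hc.dist_triangle
    have t2 : T.dist a b ≤ T.dist a x + T.dist x b := hc.dist_triangle
    omega
  obtain ⟨p1, hp1l⟩ := hc.exists_walk_length_eq_dist a x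
  obtain ⟨p2, hp2l⟩ := hc.exists_walk_length_eq_dist y b
  have hp1e : s(x, y) ∉ p1.edges := by
    intro he
    have hy : y ∈ p1.support := p1.snd_mem_support_of_mem_edges he
    have := supp_btw hc hp1l hy
    unfold Btw at this
    have := SimpleGraph.dist_comm (G := T) (u := y) (v := x)
    omega
  have hp2e : s(x, y) ∉ p2.edges := by
    intro he
    have hx : x ∈ p2.support := p2.fst_mem_support_of_mem_edges he
    have := supp_btw hc hp2l hx
    unfold Btw at this
    have := SimpleGraph.dist_comm (G := T) (u := y) (v := x)
    omega
  -- build a walk from x to y avoiding the edge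
  have hbr := (isAcyclic_iff_forall_adj_isBridge.mp hT.IsAcyclic) hxy
  rw [isBridge_iff_adj_and_forall_walk_mem_edges] at hbr
  have := hbr (p1.reverse.append (W.append p2.reverse))
  simp only [Walk.edges_append, Walk.edges_reverse, List.mem_append, List.mem_reverse] at this
  tauto

/-- The fundamental split lemma: in a tree, a vertex between `a` and `b` is,
for any `c`, between `a` and `c` or between `c` and `b`. -/
lemma btw_split (hT : T.IsTree) {a b u : V} (h : Btw T a u b) (c : V) :
    Btw T a u c ∨ Btw T c u b := by
  have hc := hT.isConnected
  rcases eq_or_ne u a with rfl | hua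
  · exact Or.inl (btw_left _ _)
  obtain ⟨p1, hp1l⟩ := hc.exists_walk_length_eq_dist a u
  have hpos : 0 < T.dist a u := hc.pos_dist_of_ne (Ne.symm hua)
  set i := T.dist a u - 1 with hi
  have hil : i ≤ p1.length := by omega
  obtain ⟨hd1, hd2⟩ := getVert_spec hc p1 hp1l hil
  set u' := p1.getVert i with hu'
  have hd2' : T.dist u' u = 1 := by
    rw [hp1l] at hd2; omega
  have hadj : T.Adj u' u := by
    rwa [SimpleGraph.dist_eq_one_iff_adj] at hd2'
  have hforced : T.dist a b = T.dist a u' + 1 + T.dist u b := by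
    unfold Btw at h
    omega
  obtain ⟨q1, hq1l⟩ := hc.exists_walk_length_eq_dist a c
  obtain ⟨q2, hq2l⟩ := hc.exists_walk_length_eq_dist c b
  have he := forced_edge hT hadj hforced (q1.append q2)
  rw [Walk.edges_append, List.mem_append] at he
  rcases he with he | he
  · exact Or.inl (supp_btw hc hq1l (q1.snd_mem_support_of_mem_edges he))
  · exact Or.inr (supp_btw hc hq2l (q2.snd_mem_support_of_mem_edges he))

/-- adjacent vertices have distances to any vertex differing by exactly one (trees). -/
lemma adj_dist_diff (hT : T.IsTree) {x y : V} (h : T.Adj x y) (c : V) :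
    T.dist c y = T.dist c x + 1 ∨ T.dist c x = T.dist c y + 1 := by
  have hc := hT.isConnected
  have hxy1 : T.dist x y = 1 := dist_adj hc h
  have t1 : T.dist c y ≤ T.dist c x + 1 := by
    have := hc.dist_triangle (u := c) (v := x) (w := y); omega
  have t2 : T.dist c x ≤ T.dist c y + 1 := by
    have := hc.dist_triangle (u := c) (v := y) (w := x)
    have := SimpleGraph.dist_comm (G := T) (u := y) (v := x)
    omega
  rcases Nat.lt_trichotomy (T.dist c x) (T.dist c y) with hlt | heq | hgt
  · left; omega
  · exfalso
    rcases eq_or_ne c x with rfl | hcx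
    · rw [SimpleGraph.dist_self] at heq
      exact h.ne (eq_of_dist_eq_zero hc heq.symm)
    obtain ⟨p1, hp1l⟩ := hc.exists_walk_length_eq_dist c x
    obtain ⟨p2, hp2l⟩ := hc.exists_walk_length_eq_dist c y
    have hp1e : s(x, y) ∉ p1.edges := by
      intro he
      have := supp_btw hc hp1l (p1.snd_mem_support_of_mem_edges he)
      unfold Btw at this
      have := SimpleGraph.dist_comm (G := T) (u := y) (v := x)
      omega
    have hp2e : s(x, y) ∉ p2.edges := by
      intro he
      have := supp_btw hc hp2l (p2.fst_mem_support_of_mem_edges he)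
      unfold Btw at this
      omega
    have hbr := (isAcyclic_iff_forall_adj_isBridge.mp hT.IsAcyclic) h
    rw [isBridge_iff_adj_and_forall_walk_mem_edges] at hbr
    have := hbr (p1.reverse.append p2)
    simp only [Walk.edges_append, Walk.edges_reverse, List.mem_append, List.mem_reverse] at this
    tauto
  · right; omega

/-- Uniqueness of the point between `v` and `p` at a given distance. -/
lemma btw_unique (hT : T.IsTree) {v p u u' : V} (h1 : Btw T v u p) (h2 : Btw T v u' p)
    (hd : T.dist u p = T.dist u' p) : u = u' := by
  have hc := hT.isConnected
  rcases btw_split hT h1 u' with hs | hs <;> unfold Btw at *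
  · have : T.dist u u' = 0 := by omega
    exact eq_of_dist_eq_zero hc this
  · have e := SimpleGraph.dist_comm (G := T) (u := u') (v := u)
    have : T.dist u' u = 0 := by omega
    exact (eq_of_dist_eq_zero hc this).symm

section FintypeV

variable [Fintype V]

/-- Median of three vertices in a tree. -/
lemma exists_median (hT : T.IsTree) (x y z : V) :
    ∃ m, Btw T x m y ∧ Btw T x m z ∧ Btw T y m z := by
  have hc := hT.isConnected
  classical
  set M : Finset V := Finset.univ.filter (fun u => Btw T x u y ∧ Btw T x u z) with hM
  have hMne : M.Nonempty := ⟨x, by simp [hM, btw_left]⟩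
  obtain ⟨u, huM, humax⟩ := Finset.exists_max_image M (fun u => T.dist x u) hMne
  rw [hM, Finset.mem_filter] at huM
  obtain ⟨-, hu1, hu2⟩ := huM
  refine ⟨u, hu1, hu2, ?_⟩
  obtain ⟨p1, hp1p, hp1l⟩ := hc.exists_path_of_dist y u
  obtain ⟨p2, hp2p, hp2l⟩ := hc.exists_path_of_dist u z
  have key : ∀ w, w ∈ p1.support → w ∈ p2.support → w = u := by
    intro w hw1 hw2
    have h1 : Btw T y w u := supp_btw hc hp1l hw1
    have h2 : Btw T u w z := supp_btw hc hp2l hw2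
    have h1' := h1.symm
    have e1 := SimpleGraph.dist_comm (G := T) (u := y) (v := u)
    have e2 := SimpleGraph.dist_comm (G := T) (u := y) (v := w)
    have e3 := SimpleGraph.dist_comm (G := T) (u := u) (v := w)
    have t1 : T.dist x w ≤ T.dist x u + T.dist u w := hc.dist_triangle
    have t2 : T.dist x y ≤ T.dist x w + T.dist w y := hc.dist_triangle
    have hxw : T.dist x w = T.dist x u + T.dist u w := by
      unfold Btw at *; omega
    have hwy : Btw T x w y := by unfold Btw at *; omega
    have hwz : Btw T x w z := by unfold Btw at *; omega
    have : w ∈ M := by rw [hM, Finset.mem_filter]; exact ⟨Finset.mem_univ _, hwy, hwz⟩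
    have hle := humax w this
    have : T.dist u w = 0 := by omega
    exact (eq_of_dist_eq_zero hc this).symm
  have hQpath : (p1.append p2).IsPath := by
    rw [Walk.isPath_def, Walk.support_append, List.nodup_append]
    refine ⟨hp1p.support_nodup, (hp2p.support_nodup).tail, ?_⟩
    intro w hw1 w' hw2 hww
    subst hww
    have hw2' : w ∈ p2.support := List.mem_of_mem_tail hw2
    have : w = u := key w hw1 hw2'
    subst this
    have := hp2p.support_nodup
    rw [p2.support_eq_cons] at this
    exact (List.nodup_cons.mp this).1 hw2
  obtain ⟨q, hqp, hql⟩ := hc.exists_path_of_dist y z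
  have hEq : (⟨p1.append p2, hQpath⟩ : T.Path y z) = ⟨q, hqp⟩ :=
    hT.IsAcyclic.path_unique _ _
  have hlen : (p1.append p2).length = T.dist y z := by
    rw [show p1.append p2 = q from congrArg Subtype.val hEq, hql]
  rw [Walk.length_append, hp1l, hp2l] at hlen
  have e1 := SimpleGraph.dist_comm (G := T) (u := y) (v := u)
  unfold Btw
  omega

/-- A set of vertices is convex if it is closed under betweenness. -/
def IsConv (T : SimpleGraph V) (C : Finset V) : Prop :=
  ∀ x ∈ C, ∀ y ∈ C, ∀ u, Btw T x u y → u ∈ C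

/-- Every point has a gate to a convex set. -/
lemma exists_gate (hT : T.IsTree) {C : Finset V} (hconv : IsConv T C) (hne : C.Nonempty)
    (v : V) : ∃ p ∈ C, ∀ q ∈ C, Btw T v p q := by
  have hc := hT.isConnected
  obtain ⟨p, hpC, hpmin⟩ := Finset.exists_min_image C (fun q => T.dist v q) hne
  refine ⟨p, hpC, fun q hq => ?_⟩
  obtain ⟨m, hm1, hm2, hm3⟩ := exists_median hT v p q
  have hmC : m ∈ C := hconv p hpC q hq m hm3
  have := hpmin m hmC
  have : m = p := by
    unfold Btw at hm1
    have : T.dist m p = 0 := by omega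
    exact eq_of_dist_eq_zero hc this
  subst this
  exact hm2

lemma gate_min (hc : T.Connected) {v p q : V} (h : Btw T v p q) : T.dist v p ≤ T.dist v q := by
  unfold Btw at h; omega

end FintypeV

section Hull

variable [Fintype V]

open scoped Classical in
/-- The convex hull (Steiner tree vertex set) of a finite set of vertices. -/
noncomputable def hull (T : SimpleGraph V) (S : Finset V) : Finset V :=
  Finset.univ.filter (fun u => ∃ a ∈ S, ∃ b ∈ S, Btw T a u b)

lemma mem_hull {S : Finset V} {u : V} :
    u ∈ hull T S ↔ ∃ a ∈ S, ∃ b ∈ S, Btw T a u b := by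
  classical
  simp [hull]

lemma subset_hull (S : Finset V) : S ⊆ hull T S := by
  intro a ha
  exact mem_hull.mpr ⟨a, ha, a, ha, btw_left a a⟩

lemma hull_mono {S S' : Finset V} (h : S ⊆ S') : hull T S ⊆ hull T S' := by
  intro u hu
  obtain ⟨a, ha, b, hb, hab⟩ := mem_hull.mp hu
  exact mem_hull.mpr ⟨a, h ha, b, h hb, hab⟩

lemma hull_nonempty {S : Finset V} (h : S.Nonempty) : (hull T S).Nonempty :=
  h.mono (subset_hull S)

lemma hull_conv (hT : T.IsTree) (S : Finset V) : IsConv T (hull T S) := by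
  have hc := hT.isConnected
  intro x hx y hy u hu
  obtain ⟨a, ha, b, hb, hxab⟩ := mem_hull.mp hx
  obtain ⟨c, hcS, d, hd, hycd⟩ := mem_hull.mp hy
  rcases btw_split hT hu a with h1 | h1
  · exact mem_hull.mpr ⟨a, ha, b, hb, Btw.trans hc h1.symm hxab⟩
  rcases btw_split hT h1 c with h2 | h2
  · exact mem_hull.mpr ⟨a, ha, c, hcS, h2⟩
  · exact mem_hull.mpr ⟨c, hcS, d, hd, Btw.trans hc h2 hycd⟩

lemma mem_hull_pair (hc : T.Connected) {v p u : V} :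
    u ∈ hull T {v, p} ↔ Btw T v u p := by
  rw [mem_hull]
  constructor
  · rintro ⟨a, ha, b, hb, h⟩
    simp only [Finset.mem_insert, Finset.mem_singleton] at ha hb
    rcases ha with rfl | rfl <;> rcases hb with rfl | rfl
    · have := btw_self_eq hc h
      subst this; exact btw_left _ _
    · exact h
    · exact h.symm
    · have := btw_self_eq hc h
      subst this; exact btw_right _ _
  · intro h
    exact ⟨v, by simp, p, by simp, h⟩

lemma card_hull_pair (hT : T.IsTree) (v p : V) :
    (hull T {v, p}).card = T.dist v p + 1 := by
  classical
  have hc := hT.isConnected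
  obtain ⟨q, hqp, hql⟩ := hc.exists_path_of_dist v p
  have hset : hull T {v, p} = (Finset.range (T.dist v p + 1)).image (fun i => q.getVert i) := by
    ext u
    rw [mem_hull_pair hc, Finset.mem_image]
    constructor
    · intro h
      refine ⟨T.dist v u, ?_, ?_⟩
      · rw [Finset.mem_range]
        unfold Btw at h
        omega
      · have hle : T.dist v u ≤ q.length := by unfold Btw at h; omega
        obtain ⟨hd1, hd2⟩ := getVert_spec hc q hql hle
        have hbg : Btw T v (q.getVert (T.dist v u)) p := by
          unfold Btw; rw [hd1, hd2, hql]
          unfold Btw at h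
          omega
        refine (btw_unique hT h hbg ?_).symm
        unfold Btw at hbg h
        omega
    · rintro ⟨i, hi, rfl⟩
      rw [Finset.mem_range] at hi
      have hle : i ≤ q.length := by omega
      obtain ⟨hd1, hd2⟩ := getVert_spec hc q hql hle
      unfold Btw
      rw [hd1, hd2, hql]
      omega
  rw [hset, Finset.card_image_of_injOn, Finset.card_range]
  intro i hi j hj hij
  rw [Finset.mem_coe, Finset.mem_range] at hi hj
  have hij' : q.getVert i = q.getVert j := hij
  have h1 := (getVert_spec hc q hql (show i ≤ q.length by omega)).1
  have h2 := (getVert_spec hc q hql (show j ≤ q.length by omega)).1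
  rw [hij'] at h1
  omega

lemma hull_insert_eq (hT : T.IsTree) {S : Finset V} (v : V) {p : V} (hp : p ∈ hull T S)
    (hgate : ∀ q ∈ hull T S, Btw T v p q) :
    hull T (insert v S) = hull T S ∪ hull T {v, p} := by
  classical
  have hc := hT.isConnected
  apply Finset.Subset.antisymm
  · intro u hu
    obtain ⟨a, ha, b, hb, hab⟩ := mem_hull.mp hu
    rw [Finset.mem_insert] at ha hb
    have main : ∀ b' : V, b' ∈ S → Btw T v u b' → u ∈ hull T S ∪ hull T {v, p} := by
      intro b' hb' h
      rcases btw_split hT h p with h1 | h1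
      · exact Finset.mem_union_right _ ((mem_hull_pair hc).mpr h1)
      · exact Finset.mem_union_left _
          (hull_conv hT S p hp b' (subset_hull S hb') u h1)
    rcases ha with rfl | ha <;> rcases hb with rfl | hb
    · have := btw_self_eq hc hab
      subst this
      exact Finset.mem_union_right _ ((mem_hull_pair hc).mpr (btw_left _ _))
    · exact main b hb hab
    · exact main a ha hab.symm
    · exact Finset.mem_union_left _ (mem_hull.mpr ⟨a, ha, b, hb, hab⟩)
  · apply Finset.union_subset
    · exact hull_mono (Finset.subset_insert v S)
    · intro u hu
      have h : Btw T v u p := (mem_hull_pair hc).mp hu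
      obtain ⟨b, hb, b', hb', hpb⟩ := mem_hull.mp hp
      rcases btw_split hT h b with h1 | h1
      · exact mem_hull.mpr ⟨v, Finset.mem_insert_self v S, b,
          Finset.mem_insert_of_mem hb, h1⟩
      · exact hull_mono (Finset.subset_insert v S)
          (mem_hull.mpr ⟨b, hb, b', hb', Btw.trans hc h1 hpb⟩)

lemma hull_inter_pair (hT : T.IsTree) {S : Finset V} (v : V) {p : V} (hp : p ∈ hull T S)
    (hgate : ∀ q ∈ hull T S, Btw T v p q) :
    hull T S ∩ hull T {v, p} = {p} := by
  classical
  have hc := hT.isConnected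
  apply Finset.Subset.antisymm
  · intro u hu
    rw [Finset.mem_inter] at hu
    have h1 : Btw T v u p := (mem_hull_pair hc).mp hu.2
    have h2 : Btw T v p u := hgate u hu.1
    rw [Finset.mem_singleton]
    unfold Btw at h1 h2
    have := SimpleGraph.dist_comm (G := T) (u := u) (v := p)
    exact eq_of_dist_eq_zero hc (by omega)
  · intro u hu
    rw [Finset.mem_singleton] at hu
    subst hu
    exact Finset.mem_inter.mpr ⟨hp, (mem_hull_pair hc).mpr (btw_right _ _)⟩

lemma card_hull_insert (hT : T.IsTree) {S : Finset V} (v : V) {p : V} (hp : p ∈ hull T S)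
    (hgate : ∀ q ∈ hull T S, Btw T v p q) :
    (hull T (insert v S)).card = (hull T S).card + T.dist v p := by
  classical
  have h1 := Finset.card_union_add_card_inter (hull T S) (hull T {v, p})
  rw [hull_inter_pair hT v hp hgate] at h1
  rw [hull_insert_eq hT v hp hgate]
  have h2 := card_hull_pair hT v p
  simp only [Finset.card_singleton] at h1
  omega

lemma hull_insert_mem (hT : T.IsTree) {S : Finset V} {v : V} (hv : v ∈ hull T S) :
    hull T (insert v S) = hull T S := by
  classical
  have hc := hT.isConnected
  have hgate : ∀ q ∈ hull T S, Btw T v v q := fun q _ => btw_left v q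
  rw [hull_insert_eq hT v hv hgate]
  have : hull T {v, v} = {v} := by
    ext u
    rw [mem_hull_pair hc, Finset.mem_singleton]
    constructor
    · intro h
      exact btw_self_eq hc h
    · rintro rfl; exact btw_left _ _
  rw [this]
  rw [Finset.union_eq_left.mpr]
  simpa using hv

end Hull

section Steiner

variable [Fintype V]

lemma exists_step (hT : T.IsTree) {v c : V} (hvc : v ≠ c) :
    ∃ u, T.Adj v u ∧ Btw T v u c ∧ T.dist u c + 1 = T.dist v c := by
  have hc := hT.isConnected
  obtain ⟨p, hpl⟩ := hc.exists_walk_length_eq_dist v c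
  have hpos : 0 < T.dist v c := hc.pos_dist_of_ne hvc
  have h1 : (1 : ℕ) ≤ p.length := by omega
  obtain ⟨hd1, hd2⟩ := getVert_spec hc p hpl h1
  refine ⟨p.getVert 1, ?_, ?_, ?_⟩
  · rw [← SimpleGraph.dist_eq_one_iff_adj]
    exact hd1
  · unfold Btw; omega
  · omega

/-- The next vertex from `v` on the way to `c`. -/
noncomputable def stepTo (T : SimpleGraph V) (c v : V) : V := by
  classical
  exact if h : ∃ u, T.Adj v u ∧ Btw T v u c ∧ T.dist u c + 1 = T.dist v c
    then h.choose else v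

lemma stepTo_spec (hT : T.IsTree) {v c : V} (hvc : v ≠ c) :
    T.Adj v (stepTo T c v) ∧ Btw T v (stepTo T c v) c ∧
      T.dist (stepTo T c v) c + 1 = T.dist v c := by
  classical
  have h := exists_step hT hvc
  rw [stepTo, dif_pos h]
  exact h.choose_spec

/-- The induced subgraph on the hull of `S`. -/
def hullSubgraph (T : SimpleGraph V) (S : Finset V) : T.Subgraph where
  verts := ↑(hull T S)
  Adj x y := T.Adj x y ∧ x ∈ hull T S ∧ y ∈ hull T S
  adj_sub h := h.1
  edge_vert h := h.2.1
  symm := ⟨fun x y h => ⟨h.1.symm, h.2.2, h.2.1⟩⟩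

lemma reachable_of_walk_in (hT : T.IsTree) {S : Finset V} {x y : V} (w : T.Walk x y)
    (hw : ∀ z ∈ w.support, z ∈ hull T S) :
    ∃ (hx : x ∈ (hullSubgraph T S).verts) (hy : y ∈ (hullSubgraph T S).verts),
      (hullSubgraph T S).coe.Reachable ⟨x, hx⟩ ⟨y, hy⟩ := by
  induction w with
  | nil =>
    exact ⟨hw _ (Walk.start_mem_support _), hw _ (Walk.start_mem_support _), Reachable.refl _⟩
  | @cons a b c h q ih =>
    have ha : a ∈ hull T S := hw _ (by simp)
    have hb : b ∈ hull T S := hw _ (by simp)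
    obtain ⟨hb', hc', hr⟩ := ih (fun z hz => hw z (by simp [hz]))
    refine ⟨ha, hc', Reachable.trans ?_ hr⟩
    have hadj : (hullSubgraph T S).Adj a b := ⟨h, ha, hb⟩
    exact (hadj.coe).reachable

lemma hullSubgraph_connected (hT : T.IsTree) {S : Finset V} (hne : S.Nonempty) :
    (hullSubgraph T S).Connected := by
  have hc := hT.isConnected
  obtain ⟨s₀, hs₀⟩ := hne
  rw [Subgraph.connected_iff]
  constructor
  · rw [Subgraph.preconnected_iff]
    intro ⟨u, hu⟩ ⟨v, hv⟩
    have hyp : ∀ (z : V), z ∈ hull T S → ∀ (hz : z ∈ (hullSubgraph T S).verts)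
        (hs : s₀ ∈ (hullSubgraph T S).verts),
        (hullSubgraph T S).coe.Reachable ⟨z, hz⟩ ⟨s₀, hs⟩ := by
      intro z hz hz' hs'
      obtain ⟨a, ha, b, hb, hzab⟩ := mem_hull.mp hz
      obtain ⟨p1, hp1l⟩ := hc.exists_walk_length_eq_dist a z
      obtain ⟨p2, hp2l⟩ := hc.exists_walk_length_eq_dist a s₀
      have hp1 : ∀ w ∈ p1.support, w ∈ hull T S := by
        intro w hw
        have := supp_btw hc hp1l hw
        exact mem_hull.mpr ⟨a, ha, b, hb, Btw.trans hc this hzab⟩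
      have hp2 : ∀ w ∈ p2.support, w ∈ hull T S := by
        intro w hw
        exact mem_hull.mpr ⟨a, ha, s₀, hs₀, supp_btw hc hp2l hw⟩
      obtain ⟨ha1, hz1, hr1⟩ := reachable_of_walk_in hT p1 hp1
      obtain ⟨ha2, hs1, hr2⟩ := reachable_of_walk_in hT p2 hp2
      exact Reachable.trans (Reachable.symm (by convert hr1)) (by convert hr2)
    have hu' : u ∈ hull T S := hu
    have hv' : v ∈ hull T S := hv
    have hs' : s₀ ∈ (hullSubgraph T S).verts := by
      show s₀ ∈ hull T S; exact subset_hull S hs₀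
    exact Reachable.trans (hyp u hu' hu hs') (Reachable.symm (hyp v hv' hv hs'))
  · exact ⟨s₀, subset_hull S hs₀⟩

lemma hullSubgraph_edgeSet (hT : T.IsTree) {S : Finset V} {c₀ : V} (hc₀ : c₀ ∈ hull T S) :
    (hullSubgraph T S).edgeSet =
      ↑(((hull T S).erase c₀).image (fun v => s(v, stepTo T c₀ v))) := by
  classical
  have hc := hT.isConnected
  ext e
  induction e with
  | _ x y =>
    simp only [Finset.coe_image, Set.mem_image, Finset.mem_coe, Finset.mem_erase]
    constructor
    · intro he
      obtain ⟨hadj, hx, hy⟩ := (Subgraph.mem_edgeSet).mp he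
      have key : ∀ x' y' : V, T.Adj x' y' → x' ∈ hull T S → y' ∈ hull T S →
          T.dist c₀ y' = T.dist c₀ x' + 1 →
          ∃ a, (a ≠ c₀ ∧ a ∈ hull T S) ∧ s(a, stepTo T c₀ a) = s(x', y') := by
        intro x' y' hadj' hx' hy' hdd
        have hyc : y' ≠ c₀ := by
          intro h; subst h
          rw [SimpleGraph.dist_self] at hdd; omega
        obtain ⟨hst_adj, hst_btw, hst_d⟩ := stepTo_spec (c := c₀) hT hyc
        have hbx : Btw T y' x' c₀ := by
          unfold Btw
          have e1 := SimpleGraph.dist_comm (G := T) (u := c₀) (v := x')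
          have e2 := SimpleGraph.dist_comm (G := T) (u := c₀) (v := y')
          have e3 : T.dist y' x' = 1 := dist_adj hc hadj'.symm
          omega
        have : x' = stepTo T c₀ y' := by
          apply btw_unique hT hbx hst_btw
          have e1 := SimpleGraph.dist_comm (G := T) (u := c₀) (v := x')
          have e2 := SimpleGraph.dist_comm (G := T) (u := c₀) (v := y')
          omega
        refine ⟨y', ⟨hyc, hy'⟩, ?_⟩
        rw [← this, Sym2.eq_swap]
      rcases adj_dist_diff hT hadj c₀ with hdd | hdd
      · obtain ⟨a, ha, hae⟩ := key x y hadj hx hy hdd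
        exact ⟨a, ha, hae⟩
      · obtain ⟨a, ha, hae⟩ := key y x hadj.symm hy hx hdd
        exact ⟨a, ha, by rw [hae, Sym2.eq_swap]⟩
    · rintro ⟨a, ⟨hac, haH⟩, heq⟩
      obtain ⟨hst_adj, hst_btw, hst_d⟩ := stepTo_spec (c := c₀) hT hac
      rw [← heq, Subgraph.mem_edgeSet]
      exact ⟨hst_adj, haH, hull_conv hT S a haH c₀ hc₀ _ hst_btw⟩

lemma hullSubgraph_ncard (hT : T.IsTree) {S : Finset V} {c₀ : V} (hc₀ : c₀ ∈ hull T S) :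
    (hullSubgraph T S).edgeSet.ncard + 1 = (hull T S).card := by
  classical
  rw [hullSubgraph_edgeSet hT hc₀, Set.ncard_coe_finset]
  rw [Finset.card_image_of_injOn]
  · rw [Finset.card_erase_of_mem hc₀]
    have : 0 < (hull T S).card := Finset.card_pos.mpr ⟨c₀, hc₀⟩
    omega
  · intro a ha b hb hab
    simp only [Finset.mem_coe, Finset.mem_erase] at ha hb
    rw [Sym2.eq_iff] at hab
    rcases hab with ⟨h1, -⟩ | ⟨h1, h2⟩
    · exact h1
    · exfalso
      obtain ⟨_, _, hda⟩ := stepTo_spec (c := c₀) hT ha.1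
      obtain ⟨_, _, hdb⟩ := stepTo_spec (c := c₀) hT hb.1
      rw [← h1] at hdb
      rw [h2] at hda
      omega

lemma hullSubgraph_edges_subset (hT : T.IsTree) {S : Finset V} (H : T.Subgraph)
    (hHc : H.Connected) (hS : ↑S ⊆ H.verts) :
    (hullSubgraph T S).edgeSet ⊆ H.edgeSet := by
  classical
  have hc := hT.isConnected
  intro e he
  induction e with
  | _ x y =>
    obtain ⟨hadj, hx, hy⟩ := (Subgraph.mem_edgeSet).mp he
    obtain ⟨a, ha, b, hb, hx_ab⟩ := mem_hull.mp hx
    obtain ⟨c, hcS, d, hd, hy_cd⟩ := mem_hull.mp hy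
    have hd1 : T.dist x y = 1 := dist_adj hc hadj
    -- find a pair (p, q) in S such that the edge is forced on the pq-path,
    -- in one of the two orientations
    have main : ∃ p q : V, p ∈ S ∧ q ∈ S ∧
        (T.dist p q = T.dist p x + 1 + T.dist y q ∨
         T.dist p q = T.dist p y + 1 + T.dist x q) := by
      have e1 := SimpleGraph.dist_comm (G := T) (u := x) (v := y)
      rcases adj_dist_diff hT hadj a with hda | hda
      rotate_left
      · -- dist a x = dist a y + 1 : pair (a, b), orientation (y, x)
        refine ⟨a, b, ha, hb, Or.inr ?_⟩
        unfold Btw at hx_ab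
        have := SimpleGraph.dist_comm (G := T) (u := x) (v := b)
        omega
      rcases adj_dist_diff hT hadj.symm c with hdc | hdc
      rotate_left
      · -- dist c y = dist c x + 1 : pair (c, d), orientation (x, y)
        refine ⟨c, d, hcS, hd, Or.inl ?_⟩
        unfold Btw at hy_cd
        have := SimpleGraph.dist_comm (G := T) (u := y) (v := d)
        omega
      · -- dist a y = dist a x + 1 and dist c x = dist c y + 1
        rcases btw_split hT hx_ab c with hsp | hsp
        · refine ⟨a, c, ha, hcS, Or.inl ?_⟩
          unfold Btw at hsp
          have := SimpleGraph.dist_comm (G := T) (u := x) (v := c)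
          have := SimpleGraph.dist_comm (G := T) (u := y) (v := c)
          omega
        · refine ⟨c, b, hcS, hb, Or.inr ?_⟩
          unfold Btw at hsp
          have := SimpleGraph.dist_comm (G := T) (u := x) (v := b)
          omega
    obtain ⟨p, q, hp, hq, hor⟩ := main
    have hpH : p ∈ H.verts := hS (by simpa using hp)
    have hqH : q ∈ H.verts := hS (by simpa using hq)
    obtain ⟨w⟩ := hHc.preconnected ⟨p, hpH⟩ ⟨q, hqH⟩
    have hmem : s(x, y) ∈ (w.map (Subgraph.hom H)).edges := by
      rcases hor with hor | hor
      · exact forced_edge hT hadj hor _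
      · rw [Sym2.eq_swap]
        exact forced_edge hT hadj.symm hor _
    rw [Walk.edges_map, List.mem_map] at hmem
    obtain ⟨e', he', heq⟩ := hmem
    have := w.edges_subset_edgeSet he'
    induction e' with
    | _ u' v' =>
      simp only [Sym2.map_pair_eq, Subgraph.hom_apply] at heq
      rw [← heq]
      rw [SimpleGraph.mem_edgeSet] at this
      exact (Subgraph.mem_edgeSet).mpr this

/-- The Steiner distance of a nonempty finite vertex set in a tree is the size of
its convex hull minus one. -/
lemma steinerDist_eq (hT : T.IsTree) {S : Finset V} (hne : S.Nonempty) :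
    steinerDist T ↑S + 1 = (hull T S).card := by
  classical
  obtain ⟨s₀, hs₀⟩ := hne
  have hc₀ : s₀ ∈ hull T S := subset_hull S hs₀
  have hmem : (hull T S).card - 1 ∈
      {n | ∃ H : T.Subgraph, H.Connected ∧ ↑S ⊆ H.verts ∧ H.edgeSet.ncard = n} := by
    refine ⟨hullSubgraph T S, hullSubgraph_connected hT ⟨s₀, hs₀⟩, ?_, ?_⟩
    · intro z hz
      exact subset_hull S (by simpa using hz)
    · have := hullSubgraph_ncard hT hc₀
      omega
  have hlb : ∀ n ∈ {n | ∃ H : T.Subgraph, H.Connected ∧ ↑S ⊆ H.verts ∧ H.edgeSet.ncard = n},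
      (hull T S).card - 1 ≤ n := by
    rintro n ⟨H, hHc, hHS, rfl⟩
    have hsub := hullSubgraph_edges_subset hT H hHc hHS
    have := Set.ncard_le_ncard hsub (Set.toFinite _)
    have := hullSubgraph_ncard hT hc₀
    omega
  have : steinerDist T ↑S = (hull T S).card - 1 := by
    rw [steinerDist]
    exact le_antisymm (Nat.sInf_le hmem) (le_csInf ⟨_, hmem⟩ hlb)
  have hpos : 0 < (hull T S).card := Finset.card_pos.mpr ⟨s₀, hc₀⟩
  omega

end Steiner

section Gates

variable [Fintype V]

lemma exists_double_gate (hT : T.IsTree) {C₁ C₂ : Finset V} (h1 : IsConv T C₁)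
    (h2 : IsConv T C₂) (hne1 : C₁.Nonempty) (hne2 : C₂.Nonempty)
    (hdisj : ∀ x, ¬(x ∈ C₁ ∧ x ∈ C₂)) :
    ∃ x₁ ∈ C₁, ∃ x₂ ∈ C₂,
      (∀ z ∈ C₂, ∀ q ∈ C₁, T.dist z q = T.dist z x₂ + T.dist x₂ x₁ + T.dist x₁ q) := by
  classical
  have hc := hT.isConnected
  obtain ⟨pr, hpr, hprmin⟩ := Finset.exists_min_image (C₁ ×ˢ C₂)
    (fun p => T.dist p.1 p.2) (hne1.product hne2)
  obtain ⟨hx₁, hx₂⟩ := Finset.mem_product.mp hpr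
  set x₁ := pr.1
  set x₂ := pr.2
  have hmin : ∀ a ∈ C₁, ∀ b ∈ C₂, T.dist x₁ x₂ ≤ T.dist a b := by
    intro a ha b hb
    exact hprmin (a, b) (Finset.mem_product.mpr ⟨ha, hb⟩)
  -- x₁ is between x₂ and any q ∈ C₁
  have claimA : ∀ q ∈ C₁, Btw T x₂ x₁ q := by
    intro q hq
    obtain ⟨m, hm1, hm2, hm3⟩ := exists_median hT x₂ x₁ q
    have hmC : m ∈ C₁ := h1 x₁ hx₁ q hq m hm3
    have hge : T.dist x₁ x₂ ≤ T.dist m x₂ := hmin m hmC x₂ hx₂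
    have : m = x₁ := by
      unfold Btw at hm1
      have e1 := SimpleGraph.dist_comm (G := T) (u := x₂) (v := m)
      have e2 := SimpleGraph.dist_comm (G := T) (u := x₁) (v := x₂)
      exact eq_of_dist_eq_zero hc (by omega)
    subst this
    exact hm2
  have claimB : ∀ z ∈ C₂, Btw T x₁ x₂ z := by
    intro z hz
    obtain ⟨m, hm1, hm2, hm3⟩ := exists_median hT x₁ x₂ z
    have hmC : m ∈ C₂ := h2 x₂ hx₂ z hz m hm3
    have hge : T.dist x₁ x₂ ≤ T.dist x₁ m := hmin x₁ hx₁ m hmC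
    have : m = x₂ := by
      unfold Btw at hm1
      have e2 := SimpleGraph.dist_comm (G := T) (u := x₂) (v := m)
      exact eq_of_dist_eq_zero hc (by omega)
    subst this
    exact hm2
  -- the gate of any z ∈ C₂ on C₁ is x₁
  have claimC : ∀ z ∈ C₂, ∀ q ∈ C₁, Btw T z x₁ q := by
    intro z hz q hq
    obtain ⟨g, hgC, hg⟩ := exists_gate hT h1 hne1 z
    have hgx : Btw T z g x₁ := hg x₁ hx₁
    have : g = x₁ := by
      rcases btw_split hT hgx x₂ with hs | hs
      · exfalso
        exact hdisj g ⟨hgC, h2 z hz x₂ hx₂ g hs⟩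
      · have hge : T.dist x₁ x₂ ≤ T.dist g x₂ := hmin g hgC x₂ hx₂
        unfold Btw at hs
        have e1 := SimpleGraph.dist_comm (G := T) (u := x₂) (v := g)
        have e2 := SimpleGraph.dist_comm (G := T) (u := x₁) (v := x₂)
        exact eq_of_dist_eq_zero hc (by omega)
    subst this
    exact hg q hq
  refine ⟨x₁, hx₁, x₂, hx₂, ?_⟩
  intro z hz q hq
  have h1' := claimC z hz q hq
  have h2' := claimB z hz
  unfold Btw at h1' h2'
  have e1 := SimpleGraph.dist_comm (G := T) (u := x₁) (v := z)
  have e2 := SimpleGraph.dist_comm (G := T) (u := x₁) (v := x₂)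
  have e3 := SimpleGraph.dist_comm (G := T) (u := x₂) (v := z)
  omega

lemma card_hull_insert_le (hT : T.IsTree) {S : Finset V} (hne : S.Nonempty) (v : V)
    {p : V} (hp : p ∈ hull T S) :
    (hull T (insert v S)).card ≤ (hull T S).card + T.dist v p := by
  obtain ⟨g, hg, hgate⟩ := exists_gate hT (hull_conv hT S) (hull_nonempty hne) v
  rw [card_hull_insert hT v hg hgate]
  have := gate_min hT.isConnected (hgate p hp)
  omega

lemma SB_conv (hT : T.IsTree) {B : Finset V} (hne : B.Nonempty) (D : ℕ) :
    IsConv T (Finset.univ.filter (fun v => (hull T (insert v B)).card ≤ D)) := by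
  classical
  have hc := hT.isConnected
  intro v hv v' hv' u hu
  rw [Finset.mem_filter] at hv hv' ⊢
  refine ⟨Finset.mem_univ _, ?_⟩
  obtain ⟨g, hg, hgate⟩ := exists_gate hT (hull_conv hT B) (hull_nonempty hne) v
  obtain ⟨g', hg', hgate'⟩ := exists_gate hT (hull_conv hT B) (hull_nonempty hne) v'
  have hcv : (hull T (insert v B)).card = (hull T B).card + T.dist v g :=
    card_hull_insert hT v hg hgate
  have hcv' : (hull T (insert v' B)).card = (hull T B).card + T.dist v' g' :=
    card_hull_insert hT v' hg' hgate'
  rcases btw_split hT hu g with hs | hs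
  · -- u between v and g
    have hle : (hull T (insert u B)).card ≤ (hull T B).card + T.dist u g :=
      card_hull_insert_le hT hne u hg
    unfold Btw at hs
    omega
  rcases btw_split hT hs g' with hs2 | hs2
  · -- u between g and g', hence in the hull
    have huh : u ∈ hull T B := hull_conv hT B g hg g' hg' u hs2
    rw [hull_insert_mem hT huh]
    have hmono := Finset.card_le_card (hull_mono (T := T) (Finset.subset_insert v B))
    omega
  · -- u between g' and v'
    have hle : (hull T (insert u B)).card ≤ (hull T B).card + T.dist u g' :=
      card_hull_insert_le hT hne u hg'
    have hs2' := hs2.symm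
    unfold Btw at hs2'
    have e1 := SimpleGraph.dist_comm (G := T) (u := v') (v := u)
    omega

lemma helly3 (hT : T.IsTree) {C C' C₀ : Finset V} (hC : IsConv T C) (hC' : IsConv T C')
    (hC₀ : IsConv T C₀) (h1 : (C' ∩ C₀).Nonempty) (h2 : (C ∩ C₀).Nonempty)
    (h3 : (C ∩ C').Nonempty) : ∃ m, m ∈ C ∧ m ∈ C' ∧ m ∈ C₀ := by
  obtain ⟨x, hx⟩ := h1
  obtain ⟨y, hy⟩ := h2
  obtain ⟨z, hz⟩ := h3
  rw [Finset.mem_inter] at hx hy hz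
  obtain ⟨m, hm1, hm2, hm3⟩ := exists_median hT x y z
  exact ⟨m, hC y hy.1 z hz.1 m hm3, hC' x hx.1 z hz.2 m hm2, hC₀ x hx.2 y hy.2 m hm1⟩

lemma helly (hT : T.IsTree) [Nonempty V] (𝒞 : Finset (Finset V))
    (hconv : ∀ C ∈ 𝒞, IsConv T C) (hne : ∀ C ∈ 𝒞, C.Nonempty)
    (hpair : ∀ C ∈ 𝒞, ∀ C' ∈ 𝒞, (C ∩ C').Nonempty) :
    ∃ v, ∀ C ∈ 𝒞, v ∈ C := by
  classical
  obtain ⟨n, hn⟩ : ∃ n, 𝒞.card ≤ n := ⟨𝒞.card, le_rfl⟩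
  induction n generalizing 𝒞 with
  | zero =>
    have : 𝒞 = ∅ := Finset.card_eq_zero.mp (Nat.le_zero.mp hn)
    subst this
    exact ⟨Classical.arbitrary V, by simp⟩
  | succ n ih =>
  rcases Finset.eq_empty_or_nonempty 𝒞 with rfl | ⟨C₀, hC₀⟩
  · exact ⟨Classical.arbitrary V, by simp⟩
  rcases Finset.eq_empty_or_nonempty (𝒞.erase C₀) with her | ⟨C₁, hC₁⟩
  · obtain ⟨v, hv⟩ := hne C₀ hC₀
    refine ⟨v, fun C hC => ?_⟩
    have : C = C₀ := by
      by_contra hne'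
      exact Finset.notMem_empty C (her ▸ Finset.mem_erase.mpr ⟨hne', hC⟩)
    subst this; exact hv
  set 𝒞' := (𝒞.erase C₀).image (fun C => C ∩ C₀) with h𝒞'
  have hcard : 𝒞'.card ≤ n := by
    have h1 : 𝒞'.card ≤ (𝒞.erase C₀).card := Finset.card_image_le
    have h2 : (𝒞.erase C₀).card < 𝒞.card := Finset.card_erase_lt_of_mem hC₀
    omega
  have hmem𝒞 : ∀ C ∈ 𝒞.erase C₀, C ∈ 𝒞 := fun C hC => Finset.mem_of_mem_erase hC
  have hconv' : ∀ C' ∈ 𝒞', IsConv T C' := by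
    intro C' hC'
    obtain ⟨C, hC, rfl⟩ := Finset.mem_image.mp hC'
    intro x hx y hy u hu
    rw [Finset.mem_inter] at hx hy ⊢
    exact ⟨hconv C (hmem𝒞 C hC) x hx.1 y hy.1 u hu,
      hconv C₀ hC₀ x hx.2 y hy.2 u hu⟩
  have hne' : ∀ C' ∈ 𝒞', C'.Nonempty := by
    intro C' hC'
    obtain ⟨C, hC, rfl⟩ := Finset.mem_image.mp hC'
    exact hpair C (hmem𝒞 C hC) C₀ hC₀
  have hpair' : ∀ C' ∈ 𝒞', ∀ C'' ∈ 𝒞', (C' ∩ C'').Nonempty := by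
    intro C' hC' C'' hC''
    obtain ⟨C, hC, rfl⟩ := Finset.mem_image.mp hC'
    obtain ⟨D', hD', rfl⟩ := Finset.mem_image.mp hC''
    obtain ⟨m, hm1, hm2, hm3⟩ := helly3 hT (hconv C (hmem𝒞 C hC))
      (hconv D' (hmem𝒞 D' hD')) (hconv C₀ hC₀)
      (hpair D' (hmem𝒞 D' hD') C₀ hC₀) (hpair C (hmem𝒞 C hC) C₀ hC₀)
      (hpair C (hmem𝒞 C hC) D' (hmem𝒞 D' hD'))
    exact ⟨m, by simp [Finset.mem_inter]; tauto⟩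
  obtain ⟨v, hv⟩ := ih 𝒞' hconv' hne' hpair' hcard
  refine ⟨v, fun C hC => ?_⟩
  have hvC₀ : v ∈ C₀ := by
    have := hv (C₁ ∩ C₀) (Finset.mem_image_of_mem _ hC₁)
    exact (Finset.mem_inter.mp this).2
  rcases eq_or_ne C C₀ with rfl | hne''
  · exact hvC₀
  · have := hv (C ∩ C₀) (Finset.mem_image_of_mem _ (Finset.mem_erase.mpr ⟨hne'', hC⟩))
    exact (Finset.mem_inter.mp this).1

end Gates

section Pairwise

variable [Fintype V]

lemma SB_pairwise (hT : T.IsTree) {B₁ B₂ : Finset V} (hcard1 : 2 ≤ B₁.card)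
    (hcard2 : 2 ≤ B₂.card) {D : ℕ}
    (hD1 : ∀ C : Finset V, C.card = B₁.card → (hull T C).card ≤ D)
    (hD2 : ∀ C : Finset V, C.card = B₂.card → (hull T C).card ≤ D) :
    ∃ v, (hull T (insert v B₁)).card ≤ D ∧ (hull T (insert v B₂)).card ≤ D := by
  classical
  have hc := hT.isConnected
  have hne1 : B₁.Nonempty := Finset.card_pos.mp (by omega)
  have hne2 : B₂.Nonempty := Finset.card_pos.mp (by omega)
  have hB1 : (hull T B₁).card ≤ D := hD1 B₁ rfl
  have hB2 : (hull T B₂).card ≤ D := hD2 B₂ rfl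
  by_cases hint : ∃ x, x ∈ hull T B₁ ∧ x ∈ hull T B₂
  · obtain ⟨x, hx1, hx2⟩ := hint
    exact ⟨x, by rw [hull_insert_mem hT hx1]; exact hB1,
      by rw [hull_insert_mem hT hx2]; exact hB2⟩
  have hdisj : ∀ x, ¬(x ∈ hull T B₁ ∧ x ∈ hull T B₂) := by
    intro x hx; exact hint ⟨x, hx⟩
  obtain ⟨x₁, hx₁, x₂, hx₂, hgate⟩ := exists_double_gate hT (hull_conv hT B₁)
    (hull_conv hT B₂) (hull_nonempty hne1) (hull_nonempty hne2) hdisj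
  have hgate' : ∀ z ∈ hull T B₁, ∀ q ∈ hull T B₂,
      T.dist z q = T.dist z x₁ + T.dist x₁ x₂ + T.dist x₂ q := by
    intro z hz q hq
    have := hgate q hq z hz
    have e1 := SimpleGraph.dist_comm (G := T) (u := z) (v := q)
    have e2 := SimpleGraph.dist_comm (G := T) (u := z) (v := x₁)
    have e3 := SimpleGraph.dist_comm (G := T) (u := x₁) (v := x₂)
    have e4 := SimpleGraph.dist_comm (G := T) (u := x₂) (v := q)
    omega
  obtain ⟨w₁, hw₁⟩ := hne1
  obtain ⟨w₂, hw₂⟩ := hne2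
  have hw₂h : w₂ ∈ hull T B₂ := subset_hull _ hw₂
  have hw₁h : w₁ ∈ hull T B₁ := subset_hull _ hw₁
  -- side 1
  set B₁' := B₁.erase w₁ with hB₁'
  have hB₁'card : B₁'.card = B₁.card - 1 := Finset.card_erase_of_mem hw₁
  have hB₁'ne : B₁'.Nonempty := Finset.card_pos.mp (by omega)
  have hB₁eq : insert w₁ B₁' = B₁ := Finset.insert_erase hw₁
  have hsub1 : hull T B₁' ⊆ hull T B₁ := hull_mono (Finset.erase_subset _ _)
  obtain ⟨g₁, hg₁, hgate₁⟩ := exists_gate hT (hull_conv hT B₁') (hull_nonempty hB₁'ne) w₁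
  obtain ⟨g₁', hg₁', hgate₁'⟩ := exists_gate hT (hull_conv hT B₁') (hull_nonempty hB₁'ne) x₁
  have eq1 : (hull T B₁).card = (hull T B₁').card + T.dist w₁ g₁ := by
    rw [← hB₁eq]; exact card_hull_insert hT w₁ hg₁ hgate₁
  set C₁ := insert w₂ B₁' with hC₁def
  obtain ⟨g₂'', hg₂'', hgate₂''⟩ := exists_gate hT (hull_conv hT B₁') (hull_nonempty hB₁'ne) w₂
  have eqC1 : (hull T C₁).card = (hull T B₁').card + T.dist w₂ g₂'' :=
    card_hull_insert hT w₂ hg₂'' hgate₂''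
  have claim1 : T.dist w₂ g₂'' = T.dist w₂ x₂ + T.dist x₂ x₁ + T.dist x₁ g₁' := by
    have le1 : T.dist w₂ g₂'' ≤ T.dist w₂ g₁' :=
      gate_min hc (hgate₂'' g₁' hg₁')
    have le1' : T.dist w₂ g₁' = T.dist w₂ x₂ + T.dist x₂ x₁ + T.dist x₁ g₁' :=
      hgate w₂ hw₂h g₁' (hsub1 hg₁')
    have ge1 : T.dist w₂ g₂'' = T.dist w₂ x₂ + T.dist x₂ x₁ + T.dist x₁ g₂'' :=
      hgate w₂ hw₂h g₂'' (hsub1 hg₂'')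
    have ge2 : T.dist x₁ g₁' ≤ T.dist x₁ g₂'' := gate_min hc (hgate₁' g₂'' hg₂'')
    omega
  have tri1 : T.dist w₁ g₁ ≤ T.dist w₁ x₁ + T.dist x₁ g₁' := by
    have h1 : T.dist w₁ g₁ ≤ T.dist w₁ g₁' := gate_min hc (hgate₁ g₁' hg₁')
    have h2 : T.dist w₁ g₁' ≤ T.dist w₁ x₁ + T.dist x₁ g₁' := hc.dist_triangle
    omega
  have hw₂notB₁' : w₂ ∉ B₁' := by
    intro h
    exact hdisj w₂ ⟨hsub1 (subset_hull _ h), hw₂h⟩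
  have hC₁card : C₁.card = B₁.card := by
    rw [hC₁def, Finset.card_insert_of_notMem hw₂notB₁', hB₁'card]
    omega
  have hC1D : (hull T C₁).card ≤ D := hD1 C₁ hC₁card
  -- side 2
  set B₂' := B₂.erase w₂ with hB₂'
  have hB₂'card : B₂'.card = B₂.card - 1 := Finset.card_erase_of_mem hw₂
  have hB₂'ne : B₂'.Nonempty := Finset.card_pos.mp (by omega)
  have hB₂eq : insert w₂ B₂' = B₂ := Finset.insert_erase hw₂
  have hsub2 : hull T B₂' ⊆ hull T B₂ := hull_mono (Finset.erase_subset _ _)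
  obtain ⟨g₂, hg₂, hgate₂⟩ := exists_gate hT (hull_conv hT B₂') (hull_nonempty hB₂'ne) w₂
  obtain ⟨g₂', hg₂', hgate₂'⟩ := exists_gate hT (hull_conv hT B₂') (hull_nonempty hB₂'ne) x₂
  have eq2 : (hull T B₂).card = (hull T B₂').card + T.dist w₂ g₂ := by
    rw [← hB₂eq]; exact card_hull_insert hT w₂ hg₂ hgate₂
  set C₂ := insert w₁ B₂' with hC₂def
  obtain ⟨g₁'', hg₁'', hgate₁''⟩ := exists_gate hT (hull_conv hT B₂') (hull_nonempty hB₂'ne) w₁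
  have eqC2 : (hull T C₂).card = (hull T B₂').card + T.dist w₁ g₁'' :=
    card_hull_insert hT w₁ hg₁'' hgate₁''
  have claim2 : T.dist w₁ g₁'' = T.dist w₁ x₁ + T.dist x₁ x₂ + T.dist x₂ g₂' := by
    have le1 : T.dist w₁ g₁'' ≤ T.dist w₁ g₂' :=
      gate_min hc (hgate₁'' g₂' hg₂')
    have le1' : T.dist w₁ g₂' = T.dist w₁ x₁ + T.dist x₁ x₂ + T.dist x₂ g₂' :=
      hgate' w₁ hw₁h g₂' (hsub2 hg₂')
    have ge1 : T.dist w₁ g₁'' = T.dist w₁ x₁ + T.dist x₁ x₂ + T.dist x₂ g₁'' :=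
      hgate' w₁ hw₁h g₁'' (hsub2 hg₁'')
    have ge2 : T.dist x₂ g₂' ≤ T.dist x₂ g₁'' := gate_min hc (hgate₂' g₁'' hg₁'')
    omega
  have tri2 : T.dist w₂ g₂ ≤ T.dist w₂ x₂ + T.dist x₂ g₂' := by
    have h1 : T.dist w₂ g₂ ≤ T.dist w₂ g₂' := gate_min hc (hgate₂ g₂' hg₂')
    have h2 : T.dist w₂ g₂' ≤ T.dist w₂ x₂ + T.dist x₂ g₂' := hc.dist_triangle
    omega
  have hw₁notB₂' : w₁ ∉ B₂' := by
    intro h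
    exact hdisj w₁ ⟨hw₁h, hsub2 (subset_hull _ h)⟩
  have hC₂card : C₂.card = B₂.card := by
    rw [hC₂def, Finset.card_insert_of_notMem hw₁notB₂', hB₂'card]
    omega
  have hC2D : (hull T C₂).card ≤ D := hD2 C₂ hC₂card
  -- the main inequality
  have ecomm := SimpleGraph.dist_comm (G := T) (u := x₁) (v := x₂)
  have main : (hull T B₁).card + (hull T B₂).card + 2 * T.dist x₁ x₂ ≤ 2 * D := by
    omega
  set L := T.dist x₁ x₂ with hL
  by_cases hcase : L + (hull T B₁).card ≤ D
  · refine ⟨x₂, ?_, ?_⟩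
    · have h1 : (hull T (insert x₂ B₁)).card ≤ (hull T B₁).card + T.dist x₂ x₁ :=
        card_hull_insert_le hT ⟨w₁, hw₁⟩ x₂ hx₁
      omega
    · rw [hull_insert_mem hT hx₂]
      exact hB2
  · set t := D - (hull T B₁).card with ht
    have htL : t ≤ L := by omega
    obtain ⟨p, hpl⟩ := hc.exists_walk_length_eq_dist x₁ x₂
    have htl : t ≤ p.length := by omega
    obtain ⟨hd1, hd2⟩ := getVert_spec hc p hpl htl
    set v := p.getVert t with hv
    refine ⟨v, ?_, ?_⟩
    · have h1 : (hull T (insert v B₁)).card ≤ (hull T B₁).card + T.dist v x₁ :=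
        card_hull_insert_le hT ⟨w₁, hw₁⟩ v hx₁
      have e1 := SimpleGraph.dist_comm (G := T) (u := x₁) (v := v)
      omega
    · have h1 : (hull T (insert v B₂)).card ≤ (hull T B₂).card + T.dist v x₂ :=
        card_hull_insert_le hT ⟨w₂, hw₂⟩ v hx₂
      rw [hpl] at hd2
      omega

end Pairwise

end SteinerAux

open SteinerAux in
theorem stmt_5 [Fintype V] [DecidableEq V] (T : SimpleGraph V) (hT : T.IsTree)
    (k : ℕ) (hk : 3 ≤ k) (hk' : k ≤ Fintype.card V) :
    steinerDiam T (k - 1) = steinerRad T k := by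
  classical
  have hc := hT.isConnected
  have hVne : Nonempty V := Fintype.card_pos_iff.mp (by omega)
  set D := steinerDiam T (k - 1) with hD
  -- every (k-1)-set has hull of size at most D + 1
  have hDle : ∀ C : Finset V, C.card = k - 1 → (hull T C).card ≤ D + 1 := by
    intro C hC
    have hCne : C.Nonempty := Finset.card_pos.mp (by omega)
    have h1 : steinerDist T ↑C ≤ D := by
      apply Finset.le_sup (f := fun S : Finset V => steinerDist T (↑S : Set V))
      rw [Finset.mem_powersetCard]
      exact ⟨Finset.subset_univ _, hC⟩
    have h2 := steinerDist_eq hT hCne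
    omega
  -- the hard direction: find a vertex with small k-eccentricity
  have hSB : ∃ v : V, ∀ B : Finset V, B.card = k - 1 →
      (hull T (insert v B)).card ≤ D + 1 := by
    set 𝒞 : Finset (Finset V) := (Finset.powersetCard (k - 1) Finset.univ).image
      (fun B => Finset.univ.filter (fun v => (hull T (insert v B)).card ≤ D + 1)) with h𝒞
    have hconv : ∀ C ∈ 𝒞, IsConv T C := by
      intro C hC
      obtain ⟨B, hB, rfl⟩ := Finset.mem_image.mp hC
      rw [Finset.mem_powersetCard] at hB
      exact SB_conv hT (Finset.card_pos.mp (by omega)) (D + 1)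
    have hne : ∀ C ∈ 𝒞, C.Nonempty := by
      intro C hC
      obtain ⟨B, hB, rfl⟩ := Finset.mem_image.mp hC
      rw [Finset.mem_powersetCard] at hB
      obtain ⟨b, hb⟩ : B.Nonempty := Finset.card_pos.mp (by omega)
      refine ⟨b, Finset.mem_filter.mpr ⟨Finset.mem_univ _, ?_⟩⟩
      rw [hull_insert_mem hT (subset_hull _ hb)]
      exact hDle B hB.2
    have hpair : ∀ C ∈ 𝒞, ∀ C' ∈ 𝒞, (C ∩ C').Nonempty := by
      intro C hC C' hC'
      obtain ⟨B₁, hB₁, rfl⟩ := Finset.mem_image.mp hC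
      obtain ⟨B₂, hB₂, rfl⟩ := Finset.mem_image.mp hC'
      rw [Finset.mem_powersetCard] at hB₁ hB₂
      obtain ⟨v, hv1, hv2⟩ := SB_pairwise hT (show 2 ≤ B₁.card by omega)
        (show 2 ≤ B₂.card by omega) (D := D + 1)
        (fun C hCc => hDle C (by omega)) (fun C hCc => hDle C (by omega))
      refine ⟨v, Finset.mem_inter.mpr ⟨?_, ?_⟩⟩ <;>
        exact Finset.mem_filter.mpr ⟨Finset.mem_univ _, by assumption⟩
    obtain ⟨v, hv⟩ := helly hT 𝒞 hconv hne hpair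
    refine ⟨v, fun B hB => ?_⟩
    have hmem : (Finset.univ.filter (fun v => (hull T (insert v B)).card ≤ D + 1)) ∈ 𝒞 := by
      apply Finset.mem_image_of_mem
      rw [Finset.mem_powersetCard]
      exact ⟨Finset.subset_univ _, hB⟩
    exact (Finset.mem_filter.mp (hv _ hmem)).2
  obtain ⟨v₀, hv₀⟩ := hSB
  apply le_antisymm
  · -- steinerDiam ≤ steinerRad : for every v, D ≤ ecc_k v
    apply le_csInf (Set.range_nonempty _)
    rintro n ⟨v, rfl⟩
    rw [hD, steinerDiam]
    apply Finset.sup_le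
    intro B hB
    rw [Finset.mem_powersetCard] at hB
    have hBcard : B.card = k - 1 := hB.2
    -- find a k-set A containing v and B
    have hA : ∃ A : Finset V, A.card = k ∧ v ∈ A ∧ B ⊆ A := by
      by_cases hvB : v ∈ B
      · have : (Finset.univ \ B).Nonempty := by
          rw [Finset.sdiff_nonempty]
          intro hsub
          have := Finset.card_le_card hsub
          rw [Finset.card_univ] at this
          omega
        obtain ⟨w, hw⟩ := this
        rw [Finset.mem_sdiff] at hw
        refine ⟨insert w B, ?_, Finset.mem_insert_of_mem hvB, Finset.subset_insert _ _⟩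
        rw [Finset.card_insert_of_notMem hw.2]
        omega
      · refine ⟨insert v B, ?_, Finset.mem_insert_self _ _, Finset.subset_insert _ _⟩
        rw [Finset.card_insert_of_notMem hvB]
        omega
    obtain ⟨A, hAcard, hvA, hBA⟩ := hA
    have hBne : B.Nonempty := Finset.card_pos.mp (by omega)
    have hAne : A.Nonempty := Finset.card_pos.mp (by omega)
    have h1 : steinerDist T ↑B ≤ steinerDist T ↑A := by
      have e1 := steinerDist_eq hT hBne
      have e2 := steinerDist_eq hT hAne
      have := Finset.card_le_card (hull_mono (T := T) hBA)
      omega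
    have h2 : steinerDist T ↑A ≤ steinerEcc T k v := by
      apply Finset.le_sup (f := fun S : Finset V => steinerDist T (↑S : Set V))
      rw [Finset.mem_filter, Finset.mem_powersetCard]
      exact ⟨⟨Finset.subset_univ _, hAcard⟩, hvA⟩
    omega
  · -- steinerRad ≤ steinerDiam : via v₀
    have hecc : steinerEcc T k v₀ ≤ D := by
      rw [steinerEcc]
      apply Finset.sup_le
      intro A hA
      rw [Finset.mem_filter, Finset.mem_powersetCard] at hA
      obtain ⟨⟨-, hAcard⟩, hvA⟩ := hA
      set B := A.erase v₀ with hB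
      have hBcard : B.card = k - 1 := by
        rw [hB, Finset.card_erase_of_mem hvA, hAcard]
      have hins : insert v₀ B = A := Finset.insert_erase hvA
      have hhull := hv₀ B hBcard
      rw [hins] at hhull
      have hAne : A.Nonempty := Finset.card_pos.mp (by omega)
      have := steinerDist_eq hT hAne
      omega
    calc steinerRad T k ≤ steinerEcc T k v₀ := Nat.sInf_le ⟨v₀, rfl⟩
    _ ≤ D := hecc
end

section
/- For the cycle C_n on n vertices and any integer k with 2 ≤ k ≤ n, the Steiner k-diameter satisfies sdiam_k(C_n) = ⌊n(k−1)/k⌋. -/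
open SimpleGraph Finset

variable {V : Type*}

open Fin.NatCast Fin.CommRing

section CycAux
variable {n : ℕ} [NeZero n]

omit [NeZero n] in
lemma my_sub_val (a b : Fin n) : (a - b).val = (n - b.val + a.val) % n := by
  rw [Fin.sub_def]

lemma my_val_two (hn : 3 ≤ n) : ((2 : Fin n)).val = 2 := by
  have h : ((2:ℕ) : Fin n).val = 2 := Fin.val_cast_of_lt (by omega)
  simpa using h

lemma my_val_one (hn : 3 ≤ n) : ((1 : Fin n)).val = 1 := by
  rw [Fin.val_one']
  exact Nat.mod_eq_of_lt (by omega)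

lemma cyc_adj_succ (hn : 3 ≤ n) (x : Fin n) : (cycleGraph n).Adj x (x + 1) := by
  rw [cycleGraph_adj']
  right
  rw [add_sub_cancel_left, my_val_one hn]

lemma cyc_adj_iff (hn : 3 ≤ n) {x y : Fin n} :
    (cycleGraph n).Adj x y ↔ y = x + 1 ∨ x = y + 1 := by
  rw [cycleGraph_adj']
  constructor
  · rintro (h | h)
    · right
      have : x - y = 1 := Fin.ext (by rw [h, my_val_one hn])
      rw [← this]; ring
    · left
      have : y - x = 1 := Fin.ext (by rw [h, my_val_one hn])
      rw [← this]; ring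
  · rintro (rfl | rfl)
    · right; rw [add_sub_cancel_left, my_val_one hn]
    · left; rw [add_sub_cancel_left, my_val_one hn]

/-- the walk a, a+1, ..., a+m in the cycle graph -/
def cycWalk (hn : 3 ≤ n) (a : Fin n) : (m : ℕ) → (cycleGraph n).Walk a (a + (m : Fin n))
  | 0 => Walk.nil.copy rfl (by simp)
  | (m+1) => ((cycWalk hn a m).concat (cyc_adj_succ hn _)).copy rfl (by push_cast; ring)

lemma cycWalk_support (hn : 3 ≤ n) (a : Fin n) (m : ℕ) (x : Fin n) :
    x ∈ (cycWalk hn a m).support ↔ ∃ i ≤ m, x = a + (i : Fin n) := by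
  induction m with
  | zero =>
    simp only [cycWalk, Walk.support_copy, Walk.support_nil, List.mem_singleton]
    constructor
    · rintro rfl; exact ⟨0, le_refl 0, by simp⟩
    · rintro ⟨i, hi, rfl⟩; simp [Nat.le_zero.mp hi]
  | succ m ih =>
    simp only [cycWalk, Walk.support_copy, Walk.support_concat, List.concat_eq_append,
      List.mem_append, List.mem_singleton, ih]
    constructor
    · rintro (⟨i, hi, rfl⟩ | rfl)
      · exact ⟨i, by omega, rfl⟩
      · exact ⟨m + 1, le_refl _, by push_cast; ring⟩
    · rintro ⟨i, hi, rfl⟩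
      rcases Nat.lt_or_ge i (m + 1) with h | h
      · exact Or.inl ⟨i, by omega, rfl⟩
      · right
        have : i = m + 1 := by omega
        subst this
        push_cast; ring

lemma cycWalk_edges (hn : 3 ≤ n) (a : Fin n) (m : ℕ) (e : Sym2 (Fin n)) :
    e ∈ (cycWalk hn a m).edges ↔ ∃ i < m, e = s(a + (i : Fin n), a + (i : Fin n) + 1) := by
  induction m with
  | zero => simp [cycWalk]
  | succ m ih =>
    simp only [cycWalk, Walk.edges_copy, Walk.edges_concat, List.concat_eq_append,
      List.mem_append, List.mem_singleton, ih]
    constructor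
    · rintro (⟨i, hi, rfl⟩ | rfl)
      · exact ⟨i, by omega, rfl⟩
      · exact ⟨m, by omega, rfl⟩
    · rintro ⟨i, hi, rfl⟩
      rcases Nat.lt_or_ge i m with h | h
      · exact Or.inl ⟨i, h, rfl⟩
      · right
        have : i = m := by omega
        subst this
        rfl

lemma cycWalk_ncard (hn : 3 ≤ n) (a : Fin n) {m : ℕ} (hm : m < n) :
    (cycWalk hn a m).toSubgraph.edgeSet.ncard = m := by
  have he : (cycWalk hn a m).toSubgraph.edgeSet =
      ↑((Finset.range m).image (fun i : ℕ => s(a + (i : Fin n), a + (i : Fin n) + 1))) := by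
    ext e
    simp only [Walk.mem_edges_toSubgraph, cycWalk_edges hn a m, Finset.coe_image,
      Set.mem_image, Finset.mem_coe, Finset.mem_range]
    constructor
    · rintro ⟨i, hi, rfl⟩; exact ⟨i, hi, rfl⟩
    · rintro ⟨i, hi, rfl⟩; exact ⟨i, hi, rfl⟩
  rw [he, Set.ncard_coe_finset, Finset.card_image_of_injOn, Finset.card_range]
  intro i hi j hj hij
  simp only [Finset.coe_range, Set.mem_Iio] at hi hj
  rcases Sym2.eq_iff.mp hij with ⟨h1, _⟩ | ⟨h1, h2⟩
  · have : ((i : Fin n)) = (j : Fin n) := by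
      exact add_left_cancel h1
    have := congrArg Fin.val this
    rwa [Fin.val_cast_of_lt (by omega), Fin.val_cast_of_lt (by omega)] at this
  · exfalso
    have h3 : a + (i : Fin n) = a + (i : Fin n) + 2 := by
      calc a + (i : Fin n) = a + (j : Fin n) + 1 := h1
        _ = (a + (i : Fin n) + 1) + 1 := by rw [← h2]
        _ = a + (i : Fin n) + 2 := by ring
    have h4 : (0 : Fin n) = 2 := by
      have := add_left_cancel (a := a + (i : Fin n)) (by rw [← h3]; ring : a + (i:Fin n) + 0 = a + (i:Fin n) + 2)
      exact this
    have := congrArg Fin.val h4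
    rw [my_val_two hn] at this
    simp at this

end CycAux

section Arith

lemma g_facts {n k : ℕ} (hn : 3 ≤ n) (hk : 2 ≤ k) (hk' : k ≤ n) :
    1 ≤ n - n*(k-1)/k ∧ n - n*(k-1)/k ≤ n - 1 ∧ n ≤ k * (n - n*(k-1)/k) ∧
      k * ((n - n*(k-1)/k) - 1) < n := by
  have hk0 : 0 < k := by omega
  obtain ⟨q, hq⟩ : ∃ q, n*(k-1)/k = q := ⟨_, rfl⟩
  rw [hq]
  have hd := Nat.div_add_mod (n*(k-1)) k
  rw [hq] at hd
  have hm : n*(k-1) % k < k := Nat.mod_lt _ hk0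
  have hnk : n*(k-1) + n = n*k := by rw [← Nat.mul_succ]; congr 1; omega
  have hq1 : 1 ≤ q := by
    rw [← hq, Nat.le_div_iff_mul_le hk0, one_mul]
    calc k ≤ n := hk'
      _ = n * 1 := (mul_one n).symm
      _ ≤ n * (k-1) := Nat.mul_le_mul_left n (by omega)
  have hqlt : q < n := by
    rw [← hq, Nat.div_lt_iff_lt_mul hk0]
    have h5 : n*(k-1) < n*(k-1) + n := Nat.lt_add_of_pos_right (by omega)
    rwa [hnk] at h5
  have e1 : k * (n - q) = k*n - k*q := Nat.mul_sub k n q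
  have e2 : k * ((n - q) - 1) = k*n - k*q - k := by
    have h3 : (n - q) - 1 = n - (q+1) := by omega
    rw [h3, Nat.mul_sub, Nat.mul_succ, Nat.sub_sub]
  have hcomm : k*n = n*k := Nat.mul_comm k n
  rw [e1, e2, hcomm]
  generalize hA : n*(k-1) = A at hd hm hnk
  generalize hR : A % k = R at hd hm
  generalize hB : k*q = B at hd e1 e2 ⊢
  generalize hC : n*k = C at hnk e1 e2 ⊢
  omega

lemma div_gap {n k g : ℕ} (hk0 : 0 < k) (hkg : n ≤ k*g) (i : ℕ) :
    (i+1)*n/k ≤ i*n/k + g := by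
  have h1 : (i+1)*n = i*n + n := by ring
  calc (i+1)*n/k = (i*n + n)/k := by rw [h1]
    _ ≤ (i*n + k*g)/k := Nat.div_le_div_right (Nat.add_le_add_left hkg _)
    _ = i*n/k + g := Nat.add_mul_div_left _ _ hk0

lemma idx_spec {n k j : ℕ} (hn : 0 < n) (hk0 : 0 < k) (hj : j < n) :
    (k*j + k - 1)/n * n / k ≤ j ∧ j < ((k*j + k - 1)/n + 1) * n / k ∧ (k*j + k - 1)/n < k := by
  obtain ⟨m, hm⟩ : ∃ m, k*j + k - 1 = m := ⟨_, rfl⟩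
  rw [hm]
  obtain ⟨i, hi⟩ : ∃ i, m / n = i := ⟨_, rfl⟩
  rw [hi]
  have hd := Nat.div_add_mod m n
  rw [hi] at hd
  have hmod : m % n < n := Nat.mod_lt _ hn
  refine ⟨?_, ?_, ?_⟩
  · have h1 : n * i ≤ m := by
      generalize hA : n*i = A at hd ⊢
      generalize hR : m % n = R at hd hmod
      omega
    have h2 : i * n / k ≤ m / k := Nat.div_le_div_right (by rw [mul_comm]; exact h1)
    have h3 : m / k = j := by
      rw [← hm]
      have h4 : k*j + k - 1 = (k-1) + k*j := by
        generalize k*j = P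
        omega
      rw [h4, Nat.add_mul_div_left _ _ hk0, Nat.div_eq_of_lt (by omega), zero_add]
    rwa [h3] at h2
  · have h1 : m < n * (i+1) := by
      have h2 : n*(i+1) = n*i + n := Nat.mul_succ n i
      generalize hA : n*i = A at hd h2
      generalize hB : n*(i+1) = B at h2 ⊢
      generalize hR : m % n = R at hd hmod
      omega
    have h2 : (j+1) * k ≤ (i+1) * n := by
      have h3 : (j+1)*k = k*j + k := by ring
      have h4 : (i+1)*n = n*(i+1) := mul_comm _ _
      generalize hP : k*j = P at hm h3
      generalize hQ : n*(i+1) = Q at h1 h4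
      generalize hS : (j+1)*k = S at h3 ⊢
      generalize hT : (i+1)*n = T at h4 ⊢
      omega
    exact Nat.lt_of_succ_le ((Nat.le_div_iff_mul_le hk0).mpr h2)
  · have h1 : k * (j+1) ≤ k * n := Nat.mul_le_mul_left k (by omega)
    have h2 : k*(j+1) = k*j + k := Nat.mul_succ k j
    rw [← hi, Nat.div_lt_iff_lt_mul hn]
    generalize hP : k*j = P at hm h2
    generalize hQ : k*(j+1) = Q at h1 h2
    generalize hR : k*n = Rk at h1 ⊢
    omega

lemma idx_unique {n k j i : ℕ} (hn : 0 < n) (hk0 : 0 < k) (hj : j < n)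
    (h1 : i*n/k ≤ j) (h2 : j < (i+1)*n/k) : (k*j + k - 1)/n = i := by
  obtain ⟨ha, hb, _⟩ := idx_spec (j := j) (k := k) hn hk0 hj
  rcases lt_trichotomy ((k*j + k - 1)/n) i with h | h | h
  · exfalso
    have hmono : ((k*j + k - 1)/n + 1)*n/k ≤ i*n/k :=
      Nat.div_le_div_right (Nat.mul_le_mul_right n (by omega))
    exact absurd (lt_of_lt_of_le (lt_of_lt_of_le hb hmono) h1) (lt_irrefl j)
  · exact h
  · exfalso
    have hmono : (i+1)*n/k ≤ ((k*j + k - 1)/n)*n/k :=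
      Nat.div_le_div_right (Nat.mul_le_mul_right n (by omega))
    exact absurd (lt_of_lt_of_le (lt_of_lt_of_le h2 hmono) ha) (lt_irrefl j)

end Arith
section Lower
variable {n : ℕ} [NeZero n]

lemma my_val_one' (hn : 3 ≤ n) : ((1 : Fin n)).val = 1 := by
  rw [Fin.val_one']
  exact Nat.mod_eq_of_lt (by omega)

lemma my_val_two' (hn : 3 ≤ n) : ((2 : Fin n)).val = 2 := by
  have h : ((2:ℕ) : Fin n).val = 2 := Fin.val_cast_of_lt (by omega)
  simpa using h

lemma cyc_adj_iff' (hn : 3 ≤ n) {x y : Fin n} :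
    (cycleGraph n).Adj x y ↔ y = x + 1 ∨ x = y + 1 := by
  rw [cycleGraph_adj']
  constructor
  · rintro (h | h)
    · right
      have h2 : x - y = 1 := Fin.ext (by rw [h, my_val_one' hn])
      rw [← h2]; ring
    · left
      have h2 : y - x = 1 := Fin.ext (by rw [h, my_val_one' hn])
      rw [← h2]; ring
  · rintro (rfl | rfl)
    · right; rw [add_sub_cancel_left, my_val_one' hn]
    · left; rw [add_sub_cancel_left, my_val_one' hn]

lemma phi_inj (hn : 3 ≤ n) : Function.Injective (fun j : Fin n => s(j, j + 1)) := by
  intro i j hij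
  simp only [Sym2.eq_iff] at hij
  rcases hij with ⟨h1, _⟩ | ⟨h1, h2⟩
  · exact h1
  · exfalso
    have h3 : i + 0 = i + 2 := by
      calc i + 0 = i := add_zero i
        _ = j + 1 := h1
        _ = (i + 1) + 1 := by rw [← h2]
        _ = i + 2 := by ring
    have h4 : (0 : Fin n) = 2 := add_left_cancel h3
    have h5 := congrArg Fin.val h4
    rw [my_val_two' hn] at h5
    simp at h5

lemma edge_rep (hn : 3 ≤ n) {e : Sym2 (Fin n)} (he : e ∈ (cycleGraph n).edgeSet) :
    ∃ j : Fin n, e = s(j, j + 1) := by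
  induction e with
  | _ u v =>
    rw [mem_edgeSet] at he
    rcases (cyc_adj_iff' hn).mp he with h | h
    · exact ⟨u, by rw [h]⟩
    · exact ⟨v, by rw [h]; exact Sym2.eq_swap⟩

lemma mod_helper {m x : ℕ} (h1 : m ≤ x) (h2 : x < 2*m) : x % m = x - m := by
  rw [Nat.mod_eq_sub_mod h1]
  exact Nat.mod_eq_of_lt (by omega)

lemma lower_bound {k : ℕ} (hn : 3 ≤ n) (hk : 2 ≤ k) (hk' : k ≤ n)
    {H : (cycleGraph n).Subgraph} (hconn : H.Connected)
    (hsub : ∀ x : Fin n, (∃ i < k, x.val = i*n/k) → x ∈ H.verts) :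
    n*(k-1)/k ≤ H.edgeSet.ncard := by
  classical
  have hn0 : 0 < n := by omega
  have hk0 : 0 < k := by omega
  obtain ⟨hg1, hgn, hkg, hkg'⟩ := g_facts hn hk hk'
  set g := n - n*(k-1)/k with hgdef
  by_contra hlt
  push_neg at hlt
  set φ : Fin n → Sym2 (Fin n) := fun j => s(j, j + 1) with hφ
  set J : Finset (Fin n) := Finset.univ.filter (fun j => φ j ∈ H.edgeSet) with hJ
  have hHE : H.edgeSet = ↑(J.image φ) := by
    ext e
    constructor
    · intro he
      obtain ⟨j, rfl⟩ := edge_rep hn (H.edgeSet_subset he)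
      exact Finset.mem_coe.mpr (Finset.mem_image.mpr ⟨j, Finset.mem_filter.mpr ⟨Finset.mem_univ _, he⟩, rfl⟩)
    · intro he
      obtain ⟨j, hj, rfl⟩ := Finset.mem_image.mp (Finset.mem_coe.mp he)
      exact (Finset.mem_filter.mp hj).2
  have hncard : H.edgeSet.ncard = J.card := by
    rw [hHE, Set.ncard_coe_finset, Finset.card_image_of_injOn ((phi_inj hn).injOn)]
  set Jc : Finset (Fin n) := Finset.univ.filter (fun j => ¬ (φ j ∈ H.edgeSet)) with hJc
  have hcards : J.card + Jc.card = n := by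
    rw [hJ, hJc, Finset.card_filter_add_card_filter_not]
    simp
  have hJcg : g < Jc.card := by omega
  have hspec := fun j : Fin n => idx_spec (j := j.val) (k := k) hn0 hk0 j.isLt
  by_cases hcase : ∃ b ∈ Jc, ∃ c ∈ Jc, (k * b.val + k - 1)/n ≠ (k * c.val + k - 1)/n
  · obtain ⟨b, hb, c, hc, hne⟩ := hcase
    rw [hJc, Finset.mem_filter] at hb hc
    replace hb := hb.2
    replace hc := hc.2
    obtain ⟨hb1, hb2, hb3⟩ := hspec b
    obtain ⟨hc1, hc2, hc3⟩ := hspec c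
    have hbc : b ≠ c := fun h => hne (by rw [h])
    have hvbc : b.val ≠ c.val := fun h => hbc (Fin.ext h)
    have hbisLt := b.isLt
    have hcisLt := c.isLt
    obtain ⟨ib, hib⟩ : ∃ x, (k * b.val + k - 1)/n = x := ⟨_, rfl⟩
    obtain ⟨ic, hic⟩ : ∃ x, (k * c.val + k - 1)/n = x := ⟨_, rfl⟩
    rw [hib] at hb1 hb2 hb3 hne
    rw [hic] at hc1 hc2 hc3 hne
    obtain ⟨Ab, hAb⟩ : ∃ x, ib*n/k = x := ⟨_, rfl⟩
    obtain ⟨Nb, hNb⟩ : ∃ x, (ib+1)*n/k = x := ⟨_, rfl⟩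
    obtain ⟨Ac, hAc⟩ : ∃ x, ic*n/k = x := ⟨_, rfl⟩
    obtain ⟨Nc, hNc⟩ : ∃ x, (ic+1)*n/k = x := ⟨_, rfl⟩
    rw [hAb] at hb1
    rw [hNb] at hb2
    rw [hAc] at hc1
    rw [hNc] at hc2
    have hAblt : Ab < n := by omega
    have hAclt : Ac < n := by omega
    set ab : Fin n := ⟨Ab, hAblt⟩ with hab
    set ac : Fin n := ⟨Ac, hAclt⟩ with hac
    have hvab : (ab : Fin n).val = Ab := rfl
    have hvac : (ac : Fin n).val = Ac := rfl
    have hmem_ab : ab ∈ H.verts := hsub _ ⟨ib, hb3, by rw [hAb]⟩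
    have hmem_ac : ac ∈ H.verts := hsub _ ⟨ic, hc3, by rw [hAc]⟩
    set P : Fin n → Prop := fun x => 0 < (x - b).val ∧ (x - b).val ≤ (c - b).val with hP
    have ht0 : (c - b).val ≠ 0 := by
      intro h
      exact hbc.symm (sub_eq_zero.mp (Fin.ext (by simpa using h)))
    have hstep : ∀ x : Fin n, x ≠ b → x ≠ c → (P x ↔ P (x + 1)) := by
      intro x hxb hxc
      have hu0 : (x - b).val ≠ 0 := by
        intro h
        exact hxb (sub_eq_zero.mp (Fin.ext (by simpa using h)))
      have hut : (x - b).val ≠ (c - b).val := by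
        intro h
        exact hxc (sub_left_inj.mp (Fin.ext h))
      have hx1 : x + 1 - b = (x - b) + 1 := by ring
      have hval : (x + 1 - b).val = ((x - b).val + 1) % n := by
        rw [hx1, Fin.add_def, my_val_one' hn]
      rw [hP]
      simp only
      rw [hval]
      have hulf := (x - b).isLt
      have htlt := (c - b).isLt
      rcases Nat.lt_or_ge (x - b).val (n - 1) with h | h
      · rw [Nat.mod_eq_of_lt (by omega)]
        omega
      · have he1 : (x - b).val + 1 = n := by omega
        rw [he1, Nat.mod_self]
        omega
    have hpres : ∀ x y : Fin n, H.Adj x y → (P x ↔ P y) := by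
      intro x y hxy
      have hcyc : (cycleGraph n).Adj x y := hxy.adj_sub
      rcases (cyc_adj_iff' hn).mp hcyc with h | h
      · subst h
        have hmemE : φ x ∈ H.edgeSet := Subgraph.mem_edgeSet.mpr hxy
        have hxb : x ≠ b := fun h => hb (h ▸ hmemE)
        have hxc : x ≠ c := fun h => hc (h ▸ hmemE)
        exact hstep x hxb hxc
      · subst h
        have hmemE : φ y ∈ H.edgeSet := Subgraph.mem_edgeSet.mpr hxy.symm
        have hyb : y ≠ b := fun h => hb (h ▸ hmemE)
        have hyc : y ≠ c := fun h => hc (h ▸ hmemE)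
        exact (hstep y hyb hyc).symm
    have hPac : P ac := by
      rw [hP]
      simp only
      rw [my_sub_val, my_sub_val, hvac]
      rcases Nat.lt_or_ge b.val c.val with hbltc | hcltb
      · have hlo : b.val < Ac := by
          by_contra hcon2
          push_neg at hcon2
          have hu := idx_unique hn0 hk0 b.isLt (by rw [hAc]; exact hcon2)
            (by rw [hNc]; omega)
          rw [hib] at hu
          exact hne hu
        rw [mod_helper (by omega) (by omega), mod_helper (by omega) (by omega)]
        omega
      · have hcltb' : c.val < b.val := by omega
        rw [Nat.mod_eq_of_lt (by omega), Nat.mod_eq_of_lt (by omega)]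
        omega
    have hPab : ¬ P ab := by
      rw [hP]
      simp only
      rw [my_sub_val, my_sub_val, hvab]
      rintro ⟨h1, h2⟩
      rcases Nat.lt_or_ge Ab b.val with habv | habv
      · rw [Nat.mod_eq_of_lt (by omega)] at h1 h2
        rcases Nat.lt_or_ge b.val c.val with hbltc | hcltb
        · rw [mod_helper (by omega) (by omega)] at h2
          omega
        · have hcltb' : c.val < b.val := by omega
          rw [Nat.mod_eq_of_lt (by omega)] at h2
          have hu := idx_unique hn0 hk0 c.isLt (by rw [hAb]; omega)
            (by rw [hNb]; omega)
          rw [hic] at hu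
          exact hne hu.symm
      · have heq : Ab = b.val := by omega
        rw [heq, show n - b.val + b.val = n by omega, Nat.mod_self] at h1
        omega
    have hwalk : ∀ (uu vv : H.verts) (w : H.coe.Walk uu vv), (P uu.val ↔ P vv.val) := by
      intro uu vv w
      induction w with
      | nil => exact Iff.rfl
      | cons h p ih => exact Iff.trans (hpres _ _ ((Subgraph.coe_adj _ _ _) ▸ h)) ih
    obtain ⟨w⟩ := hconn.coe.preconnected ⟨ac, hmem_ac⟩ ⟨ab, hmem_ab⟩
    exact hPab ((hwalk _ _ w).mp hPac)
  · push_neg at hcase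
    have hne : Jc.Nonempty := Finset.card_pos.mp (by omega)
    obtain ⟨j0, hj0⟩ := hne
    have hsame : ∀ j ∈ Jc, (k * j.val + k - 1)/n = (k * j0.val + k - 1)/n :=
      fun j hj => hcase j hj j0 hj0
    have hsubset : ∀ j ∈ Jc,
        j.val ∈ Finset.Ico ((k * j0.val + k - 1)/n * n / k) ((k * j0.val + k - 1)/n * n / k + g) := by
      intro j hj
      obtain ⟨h1, h2, h3⟩ := hspec j
      rw [hsame j hj] at h1 h2
      rw [Finset.mem_Ico]
      exact ⟨h1, lt_of_lt_of_le h2 (div_gap hk0 hkg _)⟩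
    have hcard : Jc.card ≤ g := by
      have hcc := Finset.card_le_card_of_injOn (fun j : Fin n => j.val) hsubset
        (fun i _ j _ h => Fin.ext h)
      rwa [Nat.card_Ico, Nat.add_sub_cancel_left] at hcc
    omega

end Lower

section Pigeon
variable {n : ℕ} [NeZero n]

lemma exists_gap {k g : ℕ} (hk : 2 ≤ k) (hg1 : 1 ≤ g)
    (hkg' : k * (g - 1) < n) (S : Finset (Fin n)) (hS : S.card = k) :
    ∃ a ∈ S, ∀ d, 0 < d → d < g → a + (d : Fin n) ∉ S := by
  by_contra hcon
  push_neg at hcon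
  have hstep : ∀ a : Fin n, ∃ d, a ∈ S → (0 < d ∧ d < g ∧ a + (d : Fin n) ∈ S) := by
    intro a
    by_cases ha : a ∈ S
    · obtain ⟨d, hd1, hd2, hd3⟩ := hcon a ha
      exact ⟨d, fun _ => ⟨hd1, hd2, hd3⟩⟩
    · exact ⟨1, fun h => absurd h ha⟩
  choose st hst using hstep
  obtain ⟨a0, ha0⟩ : S.Nonempty := Finset.card_pos.mp (by omega)
  let D : ℕ → ℕ := fun i => Nat.rec 0 (fun _ Di => Di + st (a0 + (Di : Fin n))) i
  have hDs : ∀ i, D (i+1) = D i + st (a0 + (Nat.cast (D i) : Fin n)) := by intro i; rfl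
  have hinv : ∀ i, (a0 + (Nat.cast (D i) : Fin n)) ∈ S ∧ D i ≤ i * (g - 1) := by
    intro i
    induction i with
    | zero =>
      have hD0 : D 0 = 0 := rfl
      rw [hD0]
      simp [ha0]
    | succ i ih =>
      obtain ⟨hmem, hle⟩ := ih
      obtain ⟨h1, h2, h3⟩ := hst _ hmem
      constructor
      · rw [hDs]
        have hc : (Nat.cast (D i + st (a0 + (Nat.cast (D i) : Fin n))) : Fin n)
            = (Nat.cast (D i) : Fin n) + (Nat.cast (st (a0 + (Nat.cast (D i) : Fin n))) : Fin n) := by push_cast; ring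
        rw [hc, ← add_assoc]
        exact h3
      · rw [hDs]
        have h4 : st (a0 + (Nat.cast (D i) : Fin n)) ≤ g - 1 := by omega
        calc D i + st (a0 + (Nat.cast (D i) : Fin n)) ≤ i * (g-1) + (g-1) := by omega
          _ = (i+1)*(g-1) := by ring
  have hmono : StrictMono D := by
    apply strictMono_nat_of_lt_succ
    intro i
    rw [hDs]
    have := (hst _ (hinv i).1).1
    omega
  have hDlt : ∀ i ≤ k, D i < n := by
    intro i hi
    calc D i ≤ i * (g-1) := (hinv i).2
      _ ≤ k * (g-1) := Nat.mul_le_mul_right _ hi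
      _ < n := hkg'
  have hcard : k + 1 ≤ S.card := by
    have := Finset.card_le_card_of_injOn (s := (Finset.univ : Finset (Fin (k+1))))
      (fun i : Fin (k+1) => a0 + (Nat.cast (D i.val) : Fin n))
      (fun i _ => (hinv i.val).1)
      (by
        intro i _ j _ hij
        have h1 : (Nat.cast (D i.val) : Fin n) = (Nat.cast (D j.val) : Fin n) := add_left_cancel hij
        have h2 := congrArg Fin.val h1
        rw [Fin.val_cast_of_lt (hDlt _ (by omega)), Fin.val_cast_of_lt (hDlt _ (by omega))] at h2
        exact Fin.ext (hmono.injective h2 ▸ rfl))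
    simpa using this
  omega

end Pigeon

section Assemble
variable {n : ℕ} [NeZero n]

lemma add_sub_val (y x : Fin n) : y + (((x - y).val : ℕ) : Fin n) = x := by
  rw [Fin.cast_val_eq_self, add_comm, sub_add_cancel]

lemma sEl_mono {n' k : ℕ} (hk0 : 0 < k) (hkn : k ≤ n') {i j : ℕ} (hij : i < j) :
    i*n'/k < j*n'/k := by
  have h1 : (i*n' + k*1)/k = i*n'/k + 1 := Nat.add_mul_div_left _ _ hk0
  have h3 : (i+1)*n' = i*n' + n' := by ring
  have h2 : i*n' + k*1 ≤ (i+1)*n' := by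
    rw [h3]
    exact Nat.add_le_add_left (by omega) _
  calc i*n'/k < i*n'/k + 1 := Nat.lt_succ_self _
    _ = (i*n' + k*1)/k := h1.symm
    _ ≤ ((i+1)*n')/k := Nat.div_le_div_right h2
    _ ≤ (j*n')/k := Nat.div_le_div_right (Nat.mul_le_mul_right n' (by omega))

end Assemble

theorem stmt_7 (n k : ℕ) (hn : 3 ≤ n) (hk : 2 ≤ k) (hk' : k ≤ n) :
    steinerDiam (SimpleGraph.cycleGraph n) k = n * (k - 1) / k := by
  haveI : NeZero n := ⟨by omega⟩
  have hn0 : 0 < n := by omega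
  have hk0 : 0 < k := by omega
  obtain ⟨hg1, hgn, hkg, hkg'⟩ := g_facts hn hk hk'
  set g := n - n*(k-1)/k with hgdef
  have hqle : n*(k-1)/k ≤ n := Nat.le_of_lt_succ (by omega)
  have hq : n * (k-1) / k = n - g := by omega
  rw [hq]
  apply le_antisymm
  · -- upper bound
    apply Finset.sup_le
    intro S hS
    rw [Finset.mem_powersetCard_univ] at hS
    obtain ⟨a, haS, hgap⟩ := exists_gap hk hg1 hkg' S hS
    apply Nat.sInf_le
    refine ⟨(cycWalk hn (a + ((g:ℕ) : Fin n)) (n - g)).toSubgraph,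
      Walk.toSubgraph_connected _, ?_, cycWalk_ncard hn _ (by omega)⟩
    intro x hx
    have hxS : x ∈ S := Finset.mem_coe.mp hx
    rw [Walk.mem_verts_toSubgraph, cycWalk_support]
    have htlt := (x - a).isLt
    have htg : (x - a).val = 0 ∨ g ≤ (x - a).val := by
      by_contra hcon
      push_neg at hcon
      obtain ⟨h1, h2⟩ := hcon
      exact hgap ((x - a).val) (by omega) (by omega) (by rw [add_sub_val a x]; exact hxS)
    have hveq : x - (a + ((g:ℕ) : Fin n)) = (x - a) - ((g:ℕ) : Fin n) := by ring
    have hgval : (((g:ℕ) : Fin n)).val = g := Fin.val_cast_of_lt (by omega)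
    have hi : (x - (a + ((g:ℕ) : Fin n))).val = (n - g + (x - a).val) % n := by
      rw [hveq, my_sub_val, hgval]
    refine ⟨(x - (a + ((g:ℕ) : Fin n))).val, ?_, (add_sub_val _ _).symm⟩
    rw [hi]
    rcases htg with h | h
    · rw [h, Nat.mod_eq_of_lt (by omega)]
      omega
    · rw [mod_helper (by omega) (by omega)]
      omega
  · -- lower bound
    set S : Finset (Fin n) := Finset.univ.image
      (fun i : Fin k => (⟨i.val*n/k, Nat.div_lt_of_lt_mul ((Nat.mul_lt_mul_right hn0).mpr i.isLt)⟩ : Fin n))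
      with hSdef
    have hScard : S.card = k := by
      rw [hSdef, Finset.card_image_of_injOn, Finset.card_univ, Fintype.card_fin]
      intro i _ j _ hij
      have h2 := congrArg Fin.val hij
      simp only at h2
      by_contra hijne
      rcases Nat.lt_or_ge i.val j.val with h | h
      · exact absurd h2 (Nat.ne_of_lt (sEl_mono hk0 hk' h))
      · have h3 : j.val < i.val := by
          rcases Nat.lt_or_ge j.val i.val with h4 | h4
          · exact h4
          · exact absurd (Fin.ext (by omega) : i = j) hijne
        exact absurd h2.symm (Nat.ne_of_lt (sEl_mono hk0 hk' h3))
    have hmemP : S ∈ Finset.powersetCard k (Finset.univ : Finset (Fin n)) :=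
      Finset.mem_powersetCard_univ.mpr hScard
    simp only [steinerDiam]
    have hsup : steinerDist (cycleGraph n) (↑S : Set (Fin n)) ≤
        (Finset.powersetCard k (Finset.univ : Finset (Fin n))).sup
          (fun T => steinerDist (cycleGraph n) (↑T : Set (Fin n))) :=
      Finset.le_sup (f := fun T : Finset (Fin n) => steinerDist (cycleGraph n) (↑T : Set (Fin n))) hmemP
    refine le_trans ?_ hsup
    -- show n - g ≤ steinerDist of S
    have hnonempty : (n-1) ∈ {m | ∃ H : (cycleGraph n).Subgraph,
        H.Connected ∧ (↑S : Set (Fin n)) ⊆ H.verts ∧ H.edgeSet.ncard = m} := by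
      refine ⟨(cycWalk hn 0 (n-1)).toSubgraph, Walk.toSubgraph_connected _, ?_,
        cycWalk_ncard hn _ (by omega)⟩
      intro x _
      rw [Walk.mem_verts_toSubgraph, cycWalk_support]
      exact ⟨x.val, by omega, by rw [zero_add, Fin.cast_val_eq_self]⟩
    have hmem := Nat.sInf_mem ⟨n-1, hnonempty⟩
    obtain ⟨H, hconn, hsubS, hcardH⟩ := hmem
    have hlow : n*(k-1)/k ≤ H.edgeSet.ncard := by
      apply lower_bound hn hk hk' hconn
      intro x hxe
      obtain ⟨i, hik, hival⟩ := hxe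
      apply hsubS
      rw [hSdef]
      refine Finset.mem_coe.mpr (Finset.mem_image.mpr ⟨⟨i, hik⟩, Finset.mem_univ _, ?_⟩)
      exact Fin.ext (by simpa using hival.symm)
    simp only [steinerDist]
    omega
end

section
/- For the complete multipartite graph K_{n₁,…,n_r} with parts of sizes n₁ ≤ n₂ ≤ … ≤ n_r (r ≥ 2) and any integer k with 2 ≤ k ≤ n₁+…+n_r, the Steiner k-diameter equals k − 1 if k > n_r, and equals k if k ≤ n_r. -/
open SimpleGraph Finset

variable {V : Type*}

private lemma conn_card_le {W : Type*} [Fintype W] {G : SimpleGraph W} [Fintype G.edgeSet]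
    (h : G.Connected) : Fintype.card W ≤ G.edgeFinset.card + 1 := by
  classical
  have hne := h.nonempty
  inhabit W
  choose f hf using fun w => (h w default).exists_walk_length_eq_dist
  have key : (({default} : Finset W)ᶜ).card ≤ G.edgeFinset.card := by
    apply Finset.card_le_card_of_injOn
      (fun w => if hw : w = default then s(default, default)
        else ((f w).firstDart (Walk.not_nil_of_ne hw)).edge)
    · intro a ha
      simp only [Finset.coe_compl, Set.mem_compl_iff, Finset.coe_singleton,
        Set.mem_singleton_iff] at ha
      simp only [dif_neg ha]
      simp [Walk.edge_firstDart, mem_edgeFinset]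
      exact ((f a).adj_snd (Walk.not_nil_of_ne ha))
    · intro a ha b hb hab
      simp only [Finset.coe_compl, Set.mem_compl_iff, Finset.coe_singleton,
        Set.mem_singleton_iff] at ha hb
      simp only [dif_neg ha, dif_neg hb] at hab
      rw [dart_edge_eq_iff] at hab
      obtain hab | hab := hab
      · exact congrArg (·.fst) hab
      · have h1 : (f a).getVert 1 = b := congrArg (·.snd) hab
        have h2 : a = (f b).getVert 1 := congrArg (·.fst) hab
        exfalso
        have da := dist_le (((f a).tail).copy h1 rfl)
        have db := dist_le (((f b).tail).copy h2.symm rfl)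
        rw [Walk.length_copy] at da db
        have la := Walk.length_tail_add_one (p := f a) (Walk.not_nil_of_ne ha)
        have lb := Walk.length_tail_add_one (p := f b) (Walk.not_nil_of_ne hb)
        rw [hf a] at la; rw [hf b] at lb
        omega
  rw [Finset.card_compl, Finset.card_singleton] at key
  have : 0 < Fintype.card W := Fintype.card_pos
  omega

private lemma subgraph_verts_le [Fintype V] {G : SimpleGraph V} {H : G.Subgraph}
    (h : H.Connected) : H.verts.ncard ≤ H.edgeSet.ncard + 1 := by
  classical
  have h1 : H.verts.ncard = Fintype.card H.verts := by
    rw [← Nat.card_eq_fintype_card, Nat.card_coe_set_eq]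
  have h2 : H.edgeSet.ncard = H.coe.edgeFinset.card := by
    rw [← Subgraph.image_coe_edgeSet_coe]
    rw [Set.ncard_image_of_injective _ (Sym2.map.injective Subtype.coe_injective)]
    rw [edgeFinset_card, ← Nat.card_eq_fintype_card, Nat.card_coe_set_eq]
  have := conn_card_le (G := H.coe) h.coe
  rw [← h1, ← h2] at this
  omega

/-- An auxiliary "star-like" subgraph: vertices `S ∪ f '' S`, each `x ∈ S` joined to `f x`. -/
private def auxSub (G : SimpleGraph V) (S : Set V) (f : V → V) : G.Subgraph where
  verts := S ∪ f '' S
  Adj x y := (x ∈ S ∧ y = f x ∧ G.Adj x y) ∨ (y ∈ S ∧ x = f y ∧ G.Adj y x)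
  adj_sub := by rintro x y (⟨_, _, h⟩ | ⟨_, _, h⟩); exacts [h, h.symm]
  edge_vert := by
    rintro x y (⟨hx, _, _⟩ | ⟨hy, rfl, _⟩)
    · exact Or.inl hx
    · exact Or.inr ⟨y, hy, rfl⟩
  symm := by
    refine ⟨?_⟩
    rintro x y (⟨hx, rfl, h⟩ | ⟨hy, rfl, h⟩)
    · exact Or.inr ⟨hx, rfl, h⟩
    · exact Or.inl ⟨hy, rfl, h⟩

private lemma auxSub_verts (G : SimpleGraph V) (S : Set V) (f : V → V) :
    (auxSub G S f).verts = S ∪ f '' S := rfl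

private lemma auxSub_edgeSet (G : SimpleGraph V) (S : Set V) (f : V → V)
    (hadj : ∀ x ∈ S, G.Adj x (f x)) :
    (auxSub G S f).edgeSet = (fun x => s(x, f x)) '' S := by
  ext e
  induction e using Sym2.ind with
  | _ x y =>
    simp only [Subgraph.mem_edgeSet, auxSub, Set.mem_image]
    constructor
    · rintro (⟨hx, rfl, _⟩ | ⟨hy, rfl, _⟩)
      · exact ⟨x, hx, rfl⟩
      · exact ⟨y, hy, Sym2.eq_swap⟩
    · rintro ⟨z, hz, he⟩
      rw [Sym2.eq_iff] at he
      obtain ⟨rfl, rfl⟩ | ⟨rfl, rfl⟩ := he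
      · exact Or.inl ⟨hz, rfl, hadj _ hz⟩
      · exact Or.inr ⟨hz, rfl, hadj _ hz⟩

private lemma auxSub_connected (G : SimpleGraph V) (S : Set V) (f : V → V)
    (hS : S.Nonempty) (hadj : ∀ x ∈ S, G.Adj x (f x))
    (hcon : ∀ x ∈ S, ∀ y ∈ S, f x = f y ∨ (f x ∈ S ∧ f (f x) = f y)) :
    (auxSub G S f).Connected := by
  obtain ⟨x₀, hx₀⟩ := hS
  set H := auxSub G S f with hH
  have hmem : ∀ x ∈ S, x ∈ H.verts := fun x hx => Or.inl hx
  have hmemf : ∀ x ∈ S, f x ∈ H.verts := fun x hx => Or.inr ⟨x, hx, rfl⟩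
  have hadjH : ∀ x (hx : x ∈ S), H.Adj x (f x) := fun x hx => Or.inl ⟨hx, rfl, hadj x hx⟩
  rw [Subgraph.connected_iff]
  refine ⟨?_, ⟨x₀, hmem _ hx₀⟩⟩
  have key : ∀ x (hx : x ∈ S),
      H.coe.Reachable ⟨f x, hmemf _ hx⟩ ⟨f x₀, hmemf _ hx₀⟩ := by
    intro x hx
    rcases hcon x hx x₀ hx₀ with heq | ⟨hfx, heq⟩
    · have he : (⟨f x, hmemf _ hx⟩ : H.verts) = ⟨f x₀, hmemf _ hx₀⟩ := Subtype.ext heq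
      rw [he]
    · have : H.coe.Adj ⟨f x, hmemf _ hx⟩ ⟨f x₀, hmemf _ hx₀⟩ := by
        rw [Subgraph.coe_adj]
        have h' := hadjH (f x) hfx
        rw [heq] at h'
        exact h'
      exact this.reachable
  have key2 : ∀ v : H.verts, H.coe.Reachable v ⟨f x₀, hmemf _ hx₀⟩ := by
    rintro ⟨v, hv | ⟨x, hx, rfl⟩⟩
    · have : H.coe.Adj ⟨v, hmem _ hv⟩ ⟨f v, hmemf _ hv⟩ := by
        rw [Subgraph.coe_adj]; exact hadjH v hv
      exact this.reachable.trans (key v hv)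
    · exact key x hx
  constructor
  intro u v
  exact (key2 u).trans (key2 v).symm

section Multi

variable {r : ℕ} {n : Fin r → ℕ}

local notation "Vr" => (i : Fin r) × Fin (n i)
local notation "Gr" => completeMultipartiteGraph fun i : Fin r => Fin (n i)

private lemma mem_lower [Fintype Vr] {S : Set Vr} {m : ℕ}
    (hm : m ∈ {m' | ∃ H : (Gr).Subgraph, H.Connected ∧ S ⊆ H.verts ∧ H.edgeSet.ncard = m'}) :
    S.ncard ≤ m + 1 := by
  obtain ⟨H, hc, hsub, rfl⟩ := hm
  calc S.ncard ≤ H.verts.ncard := Set.ncard_le_ncard hsub (Set.toFinite _)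
    _ ≤ H.edgeSet.ncard + 1 := subgraph_verts_le hc

private lemma dist_of_two_parts [Fintype Vr]
    {S : Set Vr} {k : ℕ} (hk : 2 ≤ k) (hcard : S.ncard = k)
    {a b : Vr} (ha : a ∈ S) (hb : b ∈ S) (hab : a.1 ≠ b.1) :
    steinerDist (Gr) S = k - 1 := by
  classical
  set f : Vr → Vr := fun x => if x.1 = a.1 then b else a with hf
  have hfa : f a = b := by simp [hf]
  have hfb : f b = a := by simp [hf, hab.symm]
  have hadj : ∀ x ∈ S, (Gr).Adj x (f x) := by
    intro x hx
    simp only [comap_adj, top_adj, hf]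
    split
    · rename_i h; rw [h]; exact hab
    · rename_i h; exact h
  have hrange : ∀ x, f x = a ∨ f x = b := by
    intro x; simp only [hf]; split; exacts [Or.inr rfl, Or.inl rfl]
  have hfS : ∀ x, f x ∈ S := fun x => (hrange x).elim (· ▸ ha) (· ▸ hb)
  have hne : a ≠ b := fun h => hab (congrArg Sigma.fst h)
  have hSne : S.Nonempty := ⟨a, ha⟩
  have hcon : ∀ x ∈ S, ∀ y ∈ S, f x = f y ∨ (f x ∈ S ∧ f (f x) = f y) := by
    intro x _ y _
    rcases hrange x with hx | hx <;> rcases hrange y with hy | hy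
    · exact Or.inl (hx.trans hy.symm)
    · exact Or.inr ⟨hfS x, by rw [hx, hfa, hy]⟩
    · exact Or.inr ⟨hfS x, by rw [hx, hfb, hy]⟩
    · exact Or.inl (hx.trans hy.symm)
  have hverts : (auxSub (Gr) S f).verts = S := by
    rw [auxSub_verts]
    apply Set.union_eq_self_of_subset_right
    rintro _ ⟨x, _, rfl⟩; exact hfS x
  have hedges : (auxSub (Gr) S f).edgeSet.ncard = k - 1 := by
    rw [auxSub_edgeSet _ _ _ hadj]
    have himg : (fun x => s(x, f x)) '' S = (fun x => s(x, f x)) '' (S \ {a}) := by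
      apply Set.Subset.antisymm
      · rintro _ ⟨x, hx, rfl⟩
        by_cases hxa : x = a
        · subst hxa
          refine ⟨b, ⟨hb, hne.symm⟩, ?_⟩
          show s(b, f b) = s(x, f x)
          rw [hfb, hfa]
          exact Sym2.eq_swap
        · exact ⟨x, ⟨hx, hxa⟩, rfl⟩
      · exact Set.image_mono Set.diff_subset
    rw [himg, Set.ncard_image_of_injOn, Set.ncard_diff_singleton_of_mem ha, hcard]
    intro x ⟨hxS, hxa⟩ y ⟨hyS, hya⟩ hxy
    simp only [Set.mem_singleton_iff] at hxa hya
    rw [Sym2.eq_iff] at hxy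
    rcases hxy with ⟨h1, _⟩ | ⟨h1, h2⟩
    · exact h1
    · exfalso
      rcases hrange y with hy | hy
      · exact hxa (h1.trans hy)
      · apply hya
        rw [← h2, h1.trans hy, hfb]
  have hmem : k - 1 ∈ {m' | ∃ H : (Gr).Subgraph,
      H.Connected ∧ S ⊆ H.verts ∧ H.edgeSet.ncard = m'} :=
    ⟨auxSub (Gr) S f, auxSub_connected _ _ _ hSne hadj hcon, hverts.symm.subset, hedges⟩
  apply le_antisymm (Nat.sInf_le hmem)
  have h := Nat.sInf_mem (⟨k - 1, hmem⟩ : Set.Nonempty _)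
  have := mem_lower h
  rw [hcard] at this
  omega

private lemma dist_of_one_part [Fintype Vr]
    {S : Set Vr} {k : ℕ} (hk : 2 ≤ k) (hcard : S.ncard = k)
    {i₀ : Fin r} (hsame : ∀ x ∈ S, x.1 = i₀) {v : Vr} (hv : v.1 ≠ i₀) :
    steinerDist (Gr) S = k := by
  classical
  have hSne : S.Nonempty := Set.nonempty_of_ncard_ne_zero (by omega)
  set f : Vr → Vr := fun _ => v with hf
  have hadj : ∀ x ∈ S, (Gr).Adj x (f x) := by
    intro x hx
    simp only [comap_adj, top_adj, hf]
    rw [hsame x hx]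
    exact fun h => hv h.symm
  have hvS : v ∉ S := fun h => hv (hsame v h)
  have hverts : (auxSub (Gr) S f).verts = S ∪ {v} := by
    rw [auxSub_verts, hSne.image_const]
  have hedges : (auxSub (Gr) S f).edgeSet.ncard = k := by
    rw [auxSub_edgeSet _ _ _ hadj, Set.ncard_image_of_injOn, hcard]
    intro x hxS y hyS hxy
    rw [Sym2.eq_iff] at hxy
    rcases hxy with ⟨h1, _⟩ | ⟨h1, h2⟩
    · exact h1
    · have hxv : x = v := h1
      exact absurd (hxv ▸ hxS) hvS
  have hmem : k ∈ {m' | ∃ H : (Gr).Subgraph,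
      H.Connected ∧ S ⊆ H.verts ∧ H.edgeSet.ncard = m'} :=
    ⟨auxSub (Gr) S f, auxSub_connected _ _ _ hSne hadj (fun _ _ _ _ => Or.inl rfl),
      hverts ▸ Set.subset_union_left, hedges⟩
  have hlow : ∀ m ∈ {m' | ∃ H : (Gr).Subgraph,
      H.Connected ∧ S ⊆ H.verts ∧ H.edgeSet.ncard = m'}, k ≤ m := by
    rintro m ⟨H, hc, hsub, rfl⟩
    by_contra hlt
    push_neg at hlt
    have hub := subgraph_verts_le hc
    have heq : S = H.verts := by
      apply Set.eq_of_subset_of_ncard_le hsub _ (Set.toFinite _)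
      omega
    obtain ⟨x, hx, y, hy, hxy⟩ : ∃ x ∈ S, ∃ y ∈ S, x ≠ y := by
      have h2 : 1 < S.ncard := by omega
      rw [Set.one_lt_ncard_iff (Set.toFinite _)] at h2
      obtain ⟨x, y, hx, hy, hxy⟩ := h2
      exact ⟨x, hx, y, hy, hxy⟩
    have hx' : x ∈ H.verts := heq ▸ hx
    have hy' : y ∈ H.verts := heq ▸ hy
    obtain ⟨p⟩ := hc ⟨x, hx'⟩ ⟨y, hy'⟩
    have hnn : ¬ p.Nil :=
      Walk.not_nil_of_ne (fun h => hxy (congrArg Subtype.val h))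
    have hadj2 := p.adj_snd hnn
    rw [Subgraph.coe_adj] at hadj2
    have hGadj := H.adj_sub hadj2
    simp only [comap_adj, top_adj] at hGadj
    apply hGadj
    have hw : ((p.getVert 1 : H.verts) : Vr) ∈ S := heq ▸ (p.getVert 1).2
    rw [hsame x hx, hsame _ hw]
  exact le_antisymm (Nat.sInf_le hmem) (hlow _ (Nat.sInf_mem ⟨k, hmem⟩))

private lemma part_bound {S : Set Vr} {i₀ : Fin r} (hsame : ∀ x ∈ S, x.1 = i₀) :
    S.ncard ≤ n i₀ := by
  classical
  have hinj : Set.InjOn (fun x : Vr => (x.2 : ℕ)) S := by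
    rintro ⟨xi, xv⟩ hx ⟨yi, yv⟩ hy h
    have hxi : xi = i₀ := hsame _ hx
    have hyi : yi = i₀ := hsame _ hy
    subst hxi; subst hyi
    exact congrArg (Sigma.mk _) (Fin.ext h)
  have h1 : S.ncard = ((fun x : Vr => (x.2 : ℕ)) '' S).ncard :=
    (Set.ncard_image_of_injOn hinj).symm
  have h2 : (fun x : Vr => (x.2 : ℕ)) '' S ⊆ ↑(Finset.range (n i₀)) := by
    rintro _ ⟨x, hx, rfl⟩
    simp only [Finset.coe_range, Set.mem_Iio]
    have := hsame x hx
    calc (x.2 : ℕ) < n x.1 := x.2.isLt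
      _ = n i₀ := by rw [this]
  calc S.ncard = ((fun x : Vr => (x.2 : ℕ)) '' S).ncard := h1
    _ ≤ (↑(Finset.range (n i₀)) : Set ℕ).ncard :=
        Set.ncard_le_ncard h2 (Set.toFinite _)
    _ = n i₀ := by rw [Set.ncard_coe_finset, Finset.card_range]

end Multi

theorem stmt_8 (r : ℕ) (hr : 2 ≤ r) (n : Fin r → ℕ)
    (hpos : ∀ i, 1 ≤ n i) (hmono : Monotone n)
    (k : ℕ) (hk : 2 ≤ k) (hk' : k ≤ ∑ i, n i) :
    steinerDiam (completeMultipartiteGraph fun i => Fin (n i)) k =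
      if n ⟨r - 1, Nat.sub_lt (by omega) one_pos⟩ < k then k - 1 else k := by
  classical
  set ilast : Fin r := ⟨r - 1, Nat.sub_lt (by omega) one_pos⟩ with hilast
  have hle_last : ∀ i : Fin r, n i ≤ n ilast := by
    intro i
    apply hmono
    rw [Fin.le_def]
    have := i.is_lt
    simp only [hilast]
    omega
  have hcardV : Fintype.card ((i : Fin r) × Fin (n i)) = ∑ i, n i := by
    simp [Fintype.card_sigma]
  -- key dichotomy for any k-subset
  have key : ∀ S : Finset ((i : Fin r) × Fin (n i)), S.card = k →
      (if ∃ i₀, ∀ x ∈ S, x.1 = i₀ then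
        steinerDist (completeMultipartiteGraph fun i => Fin (n i)) ↑S = k
      else steinerDist (completeMultipartiteGraph fun i => Fin (n i)) ↑S = k - 1) := by
    intro S hS
    have hScard : (↑S : Set ((i : Fin r) × Fin (n i))).ncard = k := by
      rw [Set.ncard_coe_finset, hS]
    split
    · rename_i hsame
      obtain ⟨i₀, hi₀⟩ := hsame
      obtain ⟨j, hj⟩ : ∃ j : Fin r, j ≠ i₀ :=
        Fintype.exists_ne_of_one_lt_card (by simp; omega) i₀
      exact dist_of_one_part (i₀ := i₀) (v := ⟨j, ⟨0, hpos j⟩⟩) hk hScard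
        (fun x hx => hi₀ x (by simpa using hx)) hj
    · rename_i hsame
      push_neg at hsame
      have : ∃ a ∈ S, ∃ b ∈ S, a.1 ≠ b.1 := by
        by_contra h
        push_neg at h
        obtain ⟨x₀, hx₀⟩ : S.Nonempty := Finset.card_pos.mp (by omega)
        obtain ⟨x, hx, hne⟩ := hsame x₀.1
        exact hne (h x hx x₀ hx₀)
      obtain ⟨a, ha, b, hb, hab⟩ := this
      exact dist_of_two_parts hk hScard (by simpa using ha) (by simpa using hb) hab
  simp only [steinerDiam]
  obtain ⟨S₀, -, hS₀card⟩ := Finset.exists_subset_card_eq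
    (s := (Finset.univ : Finset ((i : Fin r) × Fin (n i)))) (n := k)
    (by rw [Finset.card_univ, hcardV]; exact hk')
  have hS₀mem : S₀ ∈ Finset.powersetCard k (Finset.univ : Finset ((i : Fin r) × Fin (n i))) :=
    Finset.mem_powersetCard.mpr ⟨Finset.subset_univ _, hS₀card⟩
  by_cases hcase : n ilast < k
  · rw [if_pos hcase]
    have hval : ∀ S ∈ Finset.powersetCard k
        (Finset.univ : Finset ((i : Fin r) × Fin (n i))),
        steinerDist (completeMultipartiteGraph fun i => Fin (n i)) ↑S = k - 1 := by
      intro S hSm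
      rw [Finset.mem_powersetCard] at hSm
      have := key S hSm.2
      rw [if_neg ?_] at this
      · exact this
      rintro ⟨i₀, hi₀⟩
      have hb1 : (↑S : Set ((i : Fin r) × Fin (n i))).ncard ≤ n i₀ :=
        part_bound (fun x hx => hi₀ x (by simpa using hx))
      rw [Set.ncard_coe_finset, hSm.2] at hb1
      have hb2 := hle_last i₀
      omega
    apply le_antisymm
    · exact Finset.sup_le fun S hSm => le_of_eq (hval S hSm)
    · have hls : steinerDist (completeMultipartiteGraph fun i => Fin (n i)) ↑S₀ ≤
          (Finset.powersetCard k (Finset.univ : Finset ((i : Fin r) × Fin (n i)))).sup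
            (fun S => steinerDist (completeMultipartiteGraph fun i => Fin (n i)) ↑S) :=
        by apply Finset.le_sup hS₀mem
      rw [hval S₀ hS₀mem] at hls
      exact hls
  · rw [if_neg hcase]
    push_neg at hcase
    -- a k-subset inside part `ilast`
    have himgcard : ((Finset.univ : Finset (Fin (n ilast))).image (Sigma.mk (β := fun i : Fin r => Fin (n i)) ilast)).card
        = n ilast := by
      rw [Finset.card_image_of_injective _ sigma_mk_injective, Finset.card_univ,
        Fintype.card_fin]
    obtain ⟨T, hTsub, hTcard⟩ := Finset.exists_subset_card_eq
      (s := (Finset.univ : Finset (Fin (n ilast))).image (Sigma.mk (β := fun i : Fin r => Fin (n i)) ilast)) (n := k)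
      (by rw [himgcard]; exact hcase)
    have hTmem : T ∈ Finset.powersetCard k
        (Finset.univ : Finset ((i : Fin r) × Fin (n i))) :=
      Finset.mem_powersetCard.mpr ⟨Finset.subset_univ _, hTcard⟩
    have hTsame : ∀ x ∈ T, x.1 = ilast := by
      intro x hx
      have := hTsub hx
      simp only [Finset.mem_image] at this
      obtain ⟨y, _, rfl⟩ := this
      rfl
    apply le_antisymm
    · apply Finset.sup_le
      intro S hSm
      rw [Finset.mem_powersetCard] at hSm
      have := key S hSm.2
      split at this <;> omega
    · have hT := key T hTcard
      rw [if_pos ⟨ilast, hTsame⟩] at hT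
      have hls : steinerDist (completeMultipartiteGraph fun i => Fin (n i)) ↑T ≤
          (Finset.powersetCard k (Finset.univ : Finset ((i : Fin r) × Fin (n i)))).sup
            (fun S => steinerDist (completeMultipartiteGraph fun i => Fin (n i)) ↑S) :=
        by apply Finset.le_sup hTmem
      rw [hT] at hls
      exact hls
end

section
/- Let G be a connected graph of order n and k an integer with 3 ≤ k ≤ n − 1. Then sdiam_k(G) = n − 1 if and only if the number of non-cut vertices of G is at most k. -/
open SimpleGraph Finset

variable {V : Type*}

/-- A cut vertex of a connected graph: a vertex whose removal disconnects the graph. -/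
def IsCutVertex (G : SimpleGraph V) (v : V) : Prop :=
  ¬ (G.induce {u | u ≠ v}).Connected

section Aux

private lemma reachable_of_adj_imp {W : Type*} {Γ Δ : SimpleGraph W}
    (h : ∀ a b, Γ.Adj a b → Δ.Reachable a b) {a b : W} (r : Γ.Reachable a b) :
    Δ.Reachable a b := by
  obtain ⟨w⟩ := r
  induction w with
  | nil => exact Reachable.refl _
  | cons ha _ ih => exact (h _ _ ha).trans ih

private lemma exists_isTree_le_aux {W : Type*} [Fintype W] (m : ℕ) :
    ∀ Γ : SimpleGraph W, Γ.Connected → Γ.edgeSet.ncard ≤ m → ∃ T, T ≤ Γ ∧ T.IsTree := by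
  induction m with
  | zero =>
    intro Γ hc hm
    refine ⟨Γ, le_rfl, hc, ?_⟩
    intro v c hcyc
    cases c with
    | nil => exact hcyc.ne_nil rfl
    | cons h p =>
      have hmem : s(v, _) ∈ Γ.edgeSet := h
      have he : Γ.edgeSet = ∅ :=
        (Set.ncard_eq_zero (Set.toFinite _)).mp (Nat.le_zero.mp hm)
      simp [he] at hmem
  | succ m ih =>
    intro Γ hc hm
    by_cases ha : Γ.IsAcyclic
    · exact ⟨Γ, le_rfl, hc, ha⟩
    · rw [isAcyclic_iff_forall_edge_isBridge] at ha
      push_neg at ha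
      obtain ⟨e, he, hb⟩ := ha
      induction e using Sym2.ind with
      | _ u v =>
      rw [SimpleGraph.mem_edgeSet] at he
      rw [isBridge_iff] at hb
      push_neg at hb
      have hreach : (Γ \ fromEdgeSet {s(u, v)}).Reachable u v := hb
      have hc' : (Γ \ fromEdgeSet {s(u, v)}).Connected := by
        haveI : Nonempty W := hc.nonempty
        refine ⟨fun a b => ?_⟩
        refine reachable_of_adj_imp (fun x y hxy => ?_) (hc a b)
        by_cases hxy_e : s(x, y) = s(u, v)
        · rw [Sym2.eq_iff] at hxy_e
          rcases hxy_e with ⟨rfl, rfl⟩ | ⟨rfl, rfl⟩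
          · exact hreach
          · exact hreach.symm
        · refine Adj.reachable ?_
          rw [sdiff_adj, fromEdgeSet_adj]
          exact ⟨hxy, fun hh => hxy_e hh.1⟩
      have hES : (Γ \ fromEdgeSet {s(u, v)}).edgeSet = Γ.edgeSet \ {s(u, v)} := by
        ext e
        induction e using Sym2.ind with
        | _ x y =>
        simp only [SimpleGraph.mem_edgeSet, sdiff_adj, fromEdgeSet_adj, Set.mem_diff,
          Set.mem_singleton_iff]
        constructor
        · rintro ⟨h1, h2⟩
          exact ⟨h1, fun heq => h2 ⟨heq, h1.ne⟩⟩
        · rintro ⟨h1, h2⟩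
          exact ⟨h1, fun hh => h2 hh.1⟩
      have he' : s(u, v) ∈ Γ.edgeSet := he
      have hcard : (Γ \ fromEdgeSet {s(u, v)}).edgeSet.ncard ≤ m := by
        rw [hES, Set.ncard_diff_singleton_of_mem he']
        omega
      obtain ⟨T, hTle, hT⟩ := ih _ hc' hcard
      exact ⟨T, hTle.trans sdiff_le, hT⟩

private lemma exists_isTree_le' {W : Type*} [Fintype W] {Γ : SimpleGraph W}
    (h : Γ.Connected) : ∃ T, T ≤ Γ ∧ T.IsTree :=
  exists_isTree_le_aux _ Γ h le_rfl

private lemma isTree_edgeSet_ncard {W : Type*} [Fintype W] {T : SimpleGraph W}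
    (h : T.IsTree) : T.edgeSet.ncard + 1 = Fintype.card W := by
  classical
  have inst : Fintype T.edgeSet := (Set.toFinite _).fintype
  have h2 := h.card_edgeFinset
  rwa [Set.ncard_eq_toFinset_card'] 

private lemma exists_spanning_subgraph [Fintype V] {G : SimpleGraph V} {H : G.Subgraph}
    (hH : H.Connected) :
    ∃ K : G.Subgraph, K ≤ H ∧ K.Connected ∧ K.verts = H.verts ∧
      K.edgeSet.ncard + 1 = H.verts.ncard := by
  classical
  haveI : Fintype H.verts := (Set.toFinite _).fintype
  obtain ⟨T, hTle, hT⟩ := exists_isTree_le' (Γ := H.coe) hH.coe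
  set g : T →g G := (Subgraph.hom H).comp (Hom.ofLE hTle) with hg
  set K : G.Subgraph :=
    { verts := H.verts
      Adj := fun a b => ∃ (ha : a ∈ H.verts) (hb : b ∈ H.verts), T.Adj ⟨a, ha⟩ ⟨b, hb⟩
      adj_sub := by
        rintro a b ⟨ha, hb, hab⟩
        exact H.adj_sub (hTle hab)
      edge_vert := by
        rintro a b ⟨ha, hb, hab⟩
        exact ha
      symm := by
        constructor
        rintro a b ⟨ha, hb, hab⟩
        exact ⟨hb, ha, hab.symm⟩ } with hK
  have hKle : K ≤ H := by
    constructor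
    · exact subset_rfl
    · rintro a b ⟨ha, hb, hab⟩
      exact hTle hab
  have key : ∀ {x y : H.verts} (q : T.Walk x y), (q.map g).toSubgraph ≤ K := by
    intro x y q
    induction q with
    | nil =>
      rw [Walk.map_nil, Walk.toSubgraph, singletonSubgraph_le_iff]
      exact Subtype.coe_prop _
    | cons hadj q ih =>
      rw [Walk.map_cons, Walk.toSubgraph]
      refine sup_le (SimpleGraph.subgraphOfAdj_le_of_adj K ?_) ih
      exact ⟨Subtype.coe_prop _, Subtype.coe_prop _, hadj⟩
  have hKconn : K.Connected := by
    rw [Subgraph.connected_iff_forall_exists_walk_subgraph]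
    constructor
    · exact hH.nonempty
    · intro a b ha hb
      obtain ⟨q⟩ := hT.isConnected ⟨a, ha⟩ ⟨b, hb⟩
      exact ⟨q.map g, key q⟩
  have hedge : K.edgeSet = Sym2.map (Subtype.val : H.verts → V) '' T.edgeSet := by
    ext e
    induction e using Sym2.ind with
    | _ a b =>
    simp only [Subgraph.mem_edgeSet, Set.mem_image]
    constructor
    · rintro ⟨ha, hb, hab⟩
      exact ⟨s(⟨a, ha⟩, ⟨b, hb⟩), hab, rfl⟩
    · rintro ⟨e', he', heq⟩
      induction e' using Sym2.ind with
      | _ x y =>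
      rw [Sym2.map_pair_eq, Sym2.eq_iff] at heq
      rcases heq with ⟨h1, h2⟩ | ⟨h1, h2⟩
      · subst h1; subst h2
        exact ⟨x.2, y.2, he'⟩
      · subst h1; subst h2
        exact ⟨y.2, x.2, he'.symm⟩
  have hcard : K.edgeSet.ncard + 1 = H.verts.ncard := by
    rw [hedge, Set.ncard_image_of_injective _ (Sym2.map.injective Subtype.val_injective),
      isTree_edgeSet_ncard hT, Set.ncard_eq_toFinset_card', Set.toFinset_card]
  exact ⟨K, hKle, hKconn, rfl, hcard⟩

private lemma steinerDist_le_verts [Fintype V] {G : SimpleGraph V} {H : G.Subgraph}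
    (hH : H.Connected) {S : Set V} (hS : S ⊆ H.verts) :
    steinerDist G S ≤ H.verts.ncard - 1 := by
  obtain ⟨K, _, hKc, hKv, hKe⟩ := exists_spanning_subgraph hH
  have h1 : K.edgeSet.ncard = H.verts.ncard - 1 := by omega
  exact Nat.sInf_le ⟨K, hKc, hKv ▸ hS, h1⟩

private lemma verts_ncard_le_edges [Fintype V] {G : SimpleGraph V} {H : G.Subgraph}
    (hH : H.Connected) : H.verts.ncard ≤ H.edgeSet.ncard + 1 := by
  obtain ⟨K, hKle, _, hKv, hKe⟩ := exists_spanning_subgraph hH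
  have h1 := Set.ncard_le_ncard (Subgraph.edgeSet_mono hKle) (Set.toFinite _)
  omega

private lemma induce_connected_iff_walks {G : SimpleGraph V} {s : Set V} :
    (G.induce s).Connected ↔
      s.Nonempty ∧ ∀ a ∈ s, ∀ b ∈ s, ∃ p : G.Walk a b, ∀ x ∈ p.support, x ∈ s := by
  rw [connected_induce_iff, Subgraph.connected_iff_forall_exists_walk_subgraph]
  simp only [Subgraph.induce_verts, Subgraph.verts_top]
  constructor
  · rintro ⟨hne, h⟩
    refine ⟨hne, fun a ha b hb => ?_⟩
    obtain ⟨p, hp⟩ := h ha hb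
    exact ⟨p, fun x hx => hp.1 ((p.mem_verts_toSubgraph).mpr hx)⟩
  · rintro ⟨hne, h⟩
    refine ⟨hne, fun {a b} ha hb => ?_⟩
    obtain ⟨p, hp⟩ := h a ha b hb
    refine ⟨p, le_trans p.toSubgraph_le_induce_support ?_⟩
    exact Subgraph.induce_mono le_rfl (fun x hx => hp x hx)

private lemma subgraph_walk_avoid {G : SimpleGraph V} {H : G.Subgraph} (hH : H.Connected)
    {a b : V} (ha : a ∈ H.verts) (hb : b ∈ H.verts) :
    ∃ p : G.Walk a b, ∀ x ∈ p.support, x ∈ H.verts := by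
  obtain ⟨p, hp⟩ := ((Subgraph.connected_iff_forall_exists_walk_subgraph H).mp hH).2 ha hb
  exact ⟨p, fun x hx => hp.1 ((p.mem_verts_toSubgraph).mpr hx)⟩

private lemma exists_noncut_avoid [Fintype V] {G : SimpleGraph V} (hG : G.Connected)
    {u v : V} (hv : v ≠ u) :
    ∃ w, ¬ IsCutVertex G w ∧ ∃ p : G.Walk v w, ∀ x ∈ p.support, x ≠ u := by
  classical
  set R : Set V := {x | ∃ p : G.Walk v x, ∀ y ∈ p.support, y ≠ u} with hR
  have hvR : v ∈ R := ⟨Walk.nil, by simp [hv]⟩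
  obtain ⟨w, hwR, hwmax⟩ := Set.exists_max_image R (G.dist u) (Set.toFinite R) ⟨v, hvR⟩
  obtain ⟨pw, hpw⟩ := hwR
  have hwu : w ≠ u := hpw w pw.end_mem_support
  refine ⟨w, ?_, pw, hpw⟩
  simp only [IsCutVertex, not_not]
  rw [induce_connected_iff_walks]
  have key : ∀ a, a ≠ w → ∃ q : G.Walk a u, ∀ x ∈ q.support, x ≠ w := by
    intro a haw
    by_cases hau : a = u
    · subst hau
      exact ⟨Walk.nil, by simpa using haw⟩
    · by_contra hno
      push_neg at hno
      have hmem : ∀ q : G.Walk a u, w ∈ q.support := by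
        intro q
        obtain ⟨x, hx, rfl⟩ := hno q
        exact hx
      obtain ⟨q0⟩ := hG a u
      have hw0 : w ∈ q0.support := hmem q0
      set q' : G.Walk a w := q0.takeUntil w hw0 with hq'
      have hcount := q0.count_support_takeUntil_eq_one hw0
      have hq'u : ∀ x ∈ q'.support, x ≠ u := by
        intro x hx
        rintro rfl
        set q'' : G.Walk a x := q'.takeUntil x hx with hq''
        have hw'' : w ∉ q''.support := by
          intro hw''mem
          have hsplit : q''.append (q'.dropUntil x hx) = q' := q'.take_spec hx
          have hwdrop : w ∈ (q'.dropUntil x hx).support := Walk.end_mem_support _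
          have hwtail : w ∈ (q'.dropUntil x hx).support.tail := by
            have := (q'.dropUntil x hx).support_eq_cons
            rw [this] at hwdrop
            rcases List.mem_cons.mp hwdrop with h1 | h1
            · exact absurd h1 hwu
            · exact h1
          have hc1 : 1 ≤ q''.support.count w := List.count_pos_iff.mpr hw''mem
          have hc2 : 1 ≤ ((q'.dropUntil x hx).support.tail).count w :=
            List.count_pos_iff.mpr hwtail
          rw [← hq'] at hcount
          have hs2 : q'.support = q''.support ++ (q'.dropUntil x hx).support.tail := by
            conv_lhs => rw [← hsplit]
            exact Walk.support_append _ _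
          have hs3 : q'.support.count w =
              q''.support.count w + ((q'.dropUntil x hx).support.tail).count w := by
            rw [hs2, List.count_append]
          omega
        exact hw'' (hmem q'')
      have haR : a ∈ R := by
        refine ⟨pw.append q'.reverse, ?_⟩
        intro y hy
        rw [Walk.mem_support_append_iff] at hy
        rcases hy with hy | hy
        · exact hpw y hy
        · rw [Walk.support_reverse, List.mem_reverse] at hy
          exact hq'u y hy
      obtain ⟨p, hp⟩ := hG.exists_walk_length_eq_dist u a
      have hwp : w ∈ p.support := by
        have h1 := hmem p.reverse
        rwa [Walk.support_reverse, List.mem_reverse] at h1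
      have h1 : G.dist u w ≤ (p.takeUntil w hwp).length := dist_le _
      have h2 : (p.dropUntil w hwp).length ≠ 0 := fun h0 =>
        haw (Walk.eq_of_length_eq_zero h0).symm
      have h3 : (p.takeUntil w hwp).length + (p.dropUntil w hwp).length = G.dist u a := by
        rw [← hp, ← Walk.length_append, p.take_spec hwp]
      have h4 : G.dist u a ≤ G.dist u w := hwmax a haR
      omega
  refine ⟨⟨u, hwu.symm⟩, ?_⟩
  intro a ha b hb
  obtain ⟨qa, hqa⟩ := key a ha
  obtain ⟨qb, hqb⟩ := key b hb
  refine ⟨qa.append qb.reverse, ?_⟩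
  intro x hx
  rw [Walk.mem_support_append_iff] at hx
  rcases hx with hx | hx
  · exact hqa x hx
  · rw [Walk.support_reverse, List.mem_reverse] at hx
    exact hqb x hx

end Aux

theorem stmt_11 [Fintype V] (G : SimpleGraph V) (hG : G.Connected)
    (k : ℕ) (hk : 3 ≤ k) (hk' : k ≤ Fintype.card V - 1) :
    steinerDiam G k = Fintype.card V - 1 ↔
      {v : V | ¬ IsCutVertex G v}.ncard ≤ k := by
  classical
  set n := Fintype.card V with hn
  have hn1 : 1 ≤ n := Fintype.card_pos_iff.mpr hG.nonempty
  have hn4 : 4 ≤ n := by omega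
  have htop : (⊤ : G.Subgraph).Connected := by
    rw [Subgraph.connected_iff_forall_exists_walk_subgraph]
    constructor
    · haveI := hG.nonempty
      exact Set.univ_nonempty
    · intro a b _ _
      obtain ⟨p⟩ := hG a b
      exact ⟨p, le_top⟩
  have hverts_top : (⊤ : G.Subgraph).verts.ncard = n := by
    rw [Subgraph.verts_top, Set.ncard_univ]
    exact Nat.card_eq_fintype_card.trans hn.symm
  have hub : ∀ S : Set V, steinerDist G S ≤ n - 1 := by
    intro S
    have h1 := steinerDist_le_verts htop (S := S) (by simp)
    rwa [hverts_top] at h1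
  have hdiam_ub : steinerDiam G k ≤ n - 1 := Finset.sup_le fun S _ => hub _
  set NC := {v : V | ¬ IsCutVertex G v} with hNC
  have hfinNC : NC.Finite := Set.toFinite _
  constructor
  · intro hdiam
    by_contra hcard
    push_neg at hcard
    have hle2 : steinerDiam G k ≤ n - 2 := by
      apply Finset.sup_le
      intro S hS
      rw [Finset.mem_powersetCard] at hS
      obtain ⟨hS1, hS2⟩ := hS
      obtain ⟨vnc, hvnc, hvS⟩ : ∃ v2, v2 ∈ NC ∧ v2 ∉ S := by
        by_contra hno
        push_neg at hno
        have hsub : NC ⊆ ↑S := hno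
        have h1 := Set.ncard_le_ncard hsub (Set.toFinite _)
        rw [Set.ncard_coe_finset] at h1
        omega
      have hconn : (G.induce {x | x ≠ vnc}).Connected := not_not.mp hvnc
      rw [connected_induce_iff] at hconn
      have hSsubv : (↑S : Set V) ⊆ ((⊤ : G.Subgraph).induce {x | x ≠ vnc}).verts := by
        intro x hx
        simp only [Subgraph.induce_verts, Set.mem_setOf_eq]
        intro h
        exact hvS (h ▸ hx)
      have hle := steinerDist_le_verts hconn hSsubv
      have hcompl : ({x : V | x ≠ vnc}).ncard = n - 1 := by
        have h1 : ({x : V | x ≠ vnc}) = ({vnc} : Set V)ᶜ := by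
          ext x; simp
        rw [h1]
        have h2 := Set.ncard_add_ncard_compl ({vnc} : Set V)
        rw [Set.ncard_singleton, Nat.card_eq_fintype_card, ← hn] at h2
        omega
      have hv2 : ((⊤ : G.Subgraph).induce {x | x ≠ vnc}).verts.ncard = n - 1 := by
        rw [Subgraph.induce_verts]
        exact hcompl
      rw [hv2] at hle
      omega
    omega
  · intro hcard
    obtain ⟨S, hSsub, _, hScard⟩ := Finset.exists_subsuperset_card_eq
      (n := k) (Finset.subset_univ hfinNC.toFinset)
      (by rw [Set.ncard_eq_toFinset_card NC hfinNC] at hcard; exact hcard)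
      (by rw [Finset.card_univ]; omega)
    have hmemP : S ∈ Finset.powersetCard k (Finset.univ : Finset V) := by
      rw [Finset.mem_powersetCard]
      exact ⟨Finset.subset_univ _, hScard⟩
    have hNCS : ∀ x ∈ NC, x ∈ S := fun x hx => hSsub (hfinNC.mem_toFinset.mpr hx)
    obtain ⟨K0, _, hK0c, hK0v, hK0e⟩ := exists_spanning_subgraph htop
    have hlow : n - 1 ≤ steinerDist G ↑S := by
      refine le_csInf ⟨K0.edgeSet.ncard, K0, hK0c, ?_, rfl⟩ ?_
      · rw [hK0v]; simp
      · rintro m ⟨H, hHc, hHS, rfl⟩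
        have hvu : H.verts = Set.univ := by
          by_contra hne
          obtain ⟨u, hu⟩ := Set.ne_univ_iff_exists_notMem _ |>.mp hne
          have hucut : IsCutVertex G u := by
            by_contra hnc
            exact hu (hHS (hNCS u hnc))
          rw [IsCutVertex, induce_connected_iff_walks] at hucut
          push_neg at hucut
          obtain ⟨v0, hv0S⟩ : ∃ v0, v0 ∈ S := Finset.card_pos.mp (by omega)
          have hv0 : v0 ∈ H.verts := hHS hv0S
          have hv0u : v0 ≠ u := fun h => hu (h ▸ hv0)
          have hreachS : ∀ s' ∈ S, ∃ p : G.Walk v0 s', ∀ x ∈ p.support, x ≠ u := by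
            intro s' hs'
            obtain ⟨p, hp⟩ := subgraph_walk_avoid hHc hv0 (hHS hs')
            exact ⟨p, fun x hx h => hu (h ▸ hp x hx)⟩
          obtain ⟨a, ha, b, hb, hab⟩ := hucut ⟨v0, hv0u⟩
          obtain ⟨wa, hwa, pa, hpa⟩ := exists_noncut_avoid hG (u := u) (v := a) ha
          obtain ⟨wb, hwb, pb, hpb⟩ := exists_noncut_avoid hG (u := u) (v := b) hb
          obtain ⟨qa, hqa⟩ := hreachS wa (hNCS wa hwa)
          obtain ⟨qb, hqb⟩ := hreachS wb (hNCS wb hwb)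
          obtain ⟨x, hx, hxu⟩ := hab ((pa.append qa.reverse).append (qb.append pb.reverse))
          simp only [Set.mem_setOf_eq, not_not] at hxu
          subst hxu
          rw [Walk.mem_support_append_iff, Walk.mem_support_append_iff,
            Walk.mem_support_append_iff, Walk.support_reverse, Walk.support_reverse,
            List.mem_reverse, List.mem_reverse] at hx
          rcases hx with (hx | hx) | (hx | hx)
          · exact hpa x hx rfl
          · exact hqa x hx rfl
          · exact hqb x hx rfl
          · exact hpb x hx rfl
        have h1 := verts_ncard_le_edges hHc
        rw [hvu, Set.ncard_univ, Nat.card_eq_fintype_card, ← hn] at h1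
        omega
    have hge : n - 1 ≤ steinerDiam G k := by
      unfold steinerDiam
      exact le_trans hlow (Finset.le_sup (f := fun S : Finset V => steinerDist G (↑S : Set V)) hmemP)
    omega
end
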